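/- arXiv:1712.08981 — 7 statements merged into one kernel-verified Lean document; each statement's English description precedes it below -/
import Mathlib

section
/- Let A ∈ M_r(ℂ) be a normal matrix (A·A* = A*·A), let ε > 0, let α ∈ ℂ, and let v ∈ ℂ^r be a nonzero vector with ‖(A − α·I)·v‖ ≤ ε·‖v‖. Then A has an eigenvalue β with |β − α| ≤ ε·r. -/
open scoped Matrix Matrix.Norms.L2Operator

/-! The spectral radius of a normal element of a C⋆-algebra equals its norm. Applied to the
inverse of the normal matrix `B = A - α • 1`, this gives an eigenvalue `z` of `B` with
`‖z‖⁻¹ = ‖B⁻¹‖`, hence `‖z‖ * ‖v‖ ≤ ‖B v‖ ≤ ε * ‖v‖`; and `z + α` is an eigenvalue of `A`. -/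

theorem IsStarNormal.exists_mem_spectrum_norm_inv_eq {A : Type*} [CStarAlgebra A]
    [Nontrivial A] (u : Aˣ) [IsStarNormal (u : A)] :
    ∃ z ∈ spectrum ℂ (u : A), ‖z‖⁻¹ = ‖(↑u⁻¹ : A)‖ := by
  obtain ⟨w, hw, hw_norm⟩ := spectrum.exists_nnnorm_eq_spectralRadius (↑u⁻¹ : A)
  rw [IsStarNormal.spectralRadius_eq_nnnorm, ENNReal.coe_inj] at hw_norm
  have hw0 : w ≠ 0 := fun h => (spectrum.zero_mem_iff ℂ).mp (h ▸ hw) (u⁻¹).isUnit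
  refine ⟨w⁻¹, ?_, ?_⟩
  · have := (spectrum.inv_mem_iff (r := (Units.mk0 w hw0)⁻¹) (a := u)).mpr (by simpa using hw)
    simpa using this
  · rw [norm_inv, inv_inv, ← coe_nnnorm, hw_norm, coe_nnnorm]

theorem Matrix.exists_mem_spectrum_norm_mul_le {n : Type*} [Fintype n] [DecidableEq n]
    [Nonempty n] (B : Matrix n n ℂ) [IsStarNormal B] (v : EuclideanSpace ℂ n) :
    ∃ z ∈ spectrum ℂ B, ‖z‖ * ‖v‖ ≤ ‖toEuclideanCLM (𝕜 := ℂ) B v‖ := by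
  set T := toEuclideanCLM (𝕜 := ℂ) (n := n)
  by_cases hB : IsUnit B
  · obtain ⟨u, rfl⟩ := hB
    obtain ⟨z, hz, hz_norm⟩ := IsStarNormal.exists_mem_spectrum_norm_inv_eq u
    refine ⟨z, hz, ?_⟩
    have hv : ‖v‖ ≤ ‖z‖⁻¹ * ‖T u v‖ := by
      have hv_eq : T ↑u⁻¹ (T u v) = v := by
        rw [← mul_apply_eq_comp, ← map_mul, u.inv_mul, map_one, one_apply_eq_self]
      rw [hz_norm, cstar_norm_def]
      calc ‖v‖ = ‖T ↑u⁻¹ (T u v)‖ := by rw [hv_eq]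
        _ ≤ ‖T ↑u⁻¹‖ * ‖T u v‖ := (T ↑u⁻¹).le_opNorm _
    calc ‖z‖ * ‖v‖ ≤ ‖z‖ * ‖z‖⁻¹ * ‖T u v‖ := by
          rw [mul_assoc]; exact mul_le_mul_of_nonneg_left hv (norm_nonneg z)
      _ ≤ ‖T u v‖ := mul_le_of_le_one_left (norm_nonneg _) mul_inv_le_one
  · exact ⟨0, (spectrum.zero_mem_iff ℂ).mpr hB, by simp⟩

theorem normal_approx_eigenvalue_general (r : ℕ) (A : Matrix (Fin r) (Fin r) ℂ)
    (hA : A * Aᴴ = Aᴴ * A) (ε : ℝ) (α : ℂ)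
    (v : EuclideanSpace ℂ (Fin r)) (hv : v ≠ 0)
    (h : ‖Matrix.toEuclideanCLM (𝕜 := ℂ) (A - α • 1) v‖ ≤ ε * ‖v‖) :
    ∃ β ∈ (Matrix.charpoly A).roots, ‖β - α‖ ≤ ε * r := by
  have hr : 1 ≤ r := Nat.one_le_iff_ne_zero.mpr fun hr0 =>
    hv (by subst hr0; exact Subsingleton.elim v 0)
  have : Nonempty (Fin r) := ⟨⟨0, hr⟩⟩
  have : IsStarNormal A := ⟨hA.symm⟩
  have : IsStarNormal (A - α • 1) :=
    Commute.isStarNormal_sub (by simpa using (Commute.one_right A).smul_right (star α))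
  obtain ⟨z, hz, hzv⟩ := (A - α • 1).exists_mem_spectrum_norm_mul_le v
  have hzε : ‖z‖ ≤ ε := le_of_mul_le_mul_right (hzv.trans h) (norm_pos_iff.mpr hv)
  refine ⟨z + α, ?_, ?_⟩
  · rw [Polynomial.mem_roots A.charpoly_monic.ne_zero,
      ← Matrix.mem_spectrum_iff_isRoot_charpoly, spectrum.add_mem_iff,
      Algebra.algebraMap_eq_smul_one, neg_add_eq_sub]
    exact hz
  · rw [add_sub_cancel_right]
    exact hzε.trans (le_mul_of_one_le_right ((norm_nonneg z).trans hzε) (by exact_mod_cast hr))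

/-- Approximate-eigenvalue lemma for normal matrices (Lemma 13.11.11.2 of the paper): if a
normal matrix `A` almost annihilates a nonzero vector `v` after shifting by `α`, then `A` has an
eigenvalue within distance `ε·r` of `α`. -/
theorem normal_approx_eigenvalue (r : ℕ) (A : Matrix (Fin r) (Fin r) ℂ)
    (hA : A * Aᴴ = Aᴴ * A) (ε : ℝ) (hε : 0 < ε) (α : ℂ)
    (v : EuclideanSpace ℂ (Fin r)) (hv : v ≠ 0)
    (h : ‖Matrix.toEuclideanCLM (𝕜 := ℂ) (A - α • 1) v‖ ≤ ε * ‖v‖) :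
    ∃ β ∈ (Matrix.charpoly A).roots, ‖β - α‖ ≤ ε * r :=
  normal_approx_eigenvalue_general r A hA ε α v hv h
end

section
/- Let (X,d) be a metric space, let n ≥ 1 be an integer, let x_1, …, x_n ∈ X, let ε₀ > 0, and let L₁ > 8. Then there exist an integer N with 0 ≤ N ≤ n and a partition {1, …, n} = ⊔_{j∈Λ} S_j such that: (i) d(x_a, x_b) > (L₁ − 4)·(L₁·n)^N·ε₀ for all a ∈ S_j and b ∈ S_k with j ≠ k; and (ii) d(x_a, x_b) ≤ 4·(L₁·n)^N·ε₀ for all a, b lying in the same block S_j. -/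
/-
Connect two points when they are at distance at most `L₁ (L₁ n)^k ε₀`; as `k` grows these graphs
increase, so their numbers of connected components decrease within `[1, n]` and must repeat
between two consecutive scales `N < n`.  At such a scale the components are the required blocks:
a path inside a component has fewer than `n` edges, so a block has diameter at most
`n · L₁ (L₁ n)^N ε₀ = (L₁ n)^(N+1) ε₀`, while two points in different blocks are not even adjacent
at the next scale, hence are more than `L₁ (L₁ n)^(N+1) ε₀` apart.
-/

theorem exists_lt_le_succ_of_lt_add {f : ℕ → ℕ} {n : ℕ} (h : f 0 < f n + n) :
    ∃ k < n, f k ≤ f (k + 1) := by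
  induction n with
  | zero => exact absurd h (lt_irrefl _)
  | succ n ih =>
    by_cases hle : f n ≤ f (n + 1)
    · exact ⟨n, n.lt_succ_self, hle⟩
    · obtain ⟨k, hk, hfk⟩ := ih (by omega)
      exact ⟨k, hk.trans n.lt_succ_self, hfk⟩

namespace SimpleGraph

variable {V : Type*}

theorem exists_lt_card_reachable_of_reachable_succ [Finite V] [Nonempty V]
    {G : ℕ → SimpleGraph V} (hG : Monotone G) :
    ∃ N < Nat.card V, ∀ a b, (G (N + 1)).Reachable a b → (G N).Reachable a b := by
  set g : ℕ → ℕ := fun k ↦ Nat.card (G k).ConnectedComponent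
  have hg_le : g 0 ≤ Nat.card V :=
    Nat.card_le_card_of_surjective _ Quot.mk_surjective
  have hg_pos : 0 < g (Nat.card V) := Nat.card_pos
  obtain ⟨N, hN, hgN⟩ := exists_lt_le_succ_of_lt_add (f := g) (n := Nat.card V) (by omega)
  have hN_le := hG N.le_succ
  have hbij : (ConnectedComponent.map (Hom.ofLE hN_le)).Bijective :=
    (Nat.bijective_iff_surjective_and_card _).2 ⟨ConnectedComponent.surjective_map_ofLE hN_le,
      hgN.antisymm (ConnectedComponent.card_le_card_of_le hN_le)⟩
  refine ⟨N, hN, fun a b hab ↦ ConnectedComponent.exact (hbij.1 ?_)⟩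
  simpa using ConnectedComponent.sound hab

end SimpleGraph

open SimpleGraph

section

variable {V X : Type*} [PseudoMetricSpace X]

theorem dist_le_walk_length_mul {G : SimpleGraph V} {x : V → X} {r : ℝ}
    (hG : ∀ a b, G.Adj a b → dist (x a) (x b) ≤ r) {a b : V}
    (p : G.Walk a b) : dist (x a) (x b) ≤ p.length * r := by
  induction p with
  | nil => simp
  | @cons a b c hab p ih =>
    calc dist (x a) (x c) ≤ dist (x a) (x b) + dist (x b) (x c) := dist_triangle _ _ _
      _ ≤ r + p.length * r := add_le_add (hG a b hab) ih
      _ = (p.cons hab).length * r := by rw [Walk.length_cons]; push_cast; ring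

def distGraph (x : V → X) (r : ℝ) : SimpleGraph V where
  Adj a b := a ≠ b ∧ dist (x a) (x b) ≤ r
  symm := ⟨fun _ _ h ↦ ⟨h.1.symm, dist_comm (x _) (x _) ▸ h.2⟩⟩
  loopless := ⟨fun _ h ↦ h.1 rfl⟩

@[simp]
theorem distGraph_adj {x : V → X} {r : ℝ} {a b : V} :
    (distGraph x r).Adj a b ↔ a ≠ b ∧ dist (x a) (x b) ≤ r :=
  Iff.rfl

theorem distGraph_mono (x : V → X) : Monotone (distGraph x) :=
  fun _ _ hrs _ _ h ↦ distGraph_adj.2 ⟨h.1, h.2.trans hrs⟩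

theorem lt_dist_of_not_reachable_distGraph {x : V → X} {r : ℝ} {a b : V}
    (h : ¬(distGraph x r).Reachable a b) : r < dist (x a) (x b) := by
  by_contra! hle
  exact h (Adj.reachable <| distGraph_adj.2 ⟨fun hab ↦ h (hab ▸ Reachable.refl a), hle⟩)

theorem dist_le_of_reachable_distGraph [Finite V] {x : V → X} {r : ℝ} (hr : 0 ≤ r) {a b : V}
    (h : (distGraph x r).Reachable a b) : dist (x a) (x b) ≤ Nat.card V * r := by
  have := Fintype.ofFinite V
  obtain ⟨p, hp⟩ := h.exists_isPath
  calc dist (x a) (x b) ≤ p.length * r :=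
        dist_le_walk_length_mul (fun _ _ h ↦ (distGraph_adj.1 h).2) p
    _ ≤ Nat.card V * r := by
      rw [Nat.card_eq_fintype_card]
      gcongr
      exact_mod_cast hp.length_lt.le

end

/-- Decomposition of finite tuples in a metric space into well-separated clusters of controlled
diameter (Lemma 12.6.20.11 of the paper).  The partition is specified by a labeling function
`c : Fin n → Λ`: points in different blocks are far apart, while points in the same block are
close. -/
theorem cluster_decomposition {X : Type*} [MetricSpace X] (n : ℕ) (hn : 1 ≤ n)
    (x : Fin n → X) (ε₀ : ℝ) (hε₀ : 0 < ε₀) (L₁ : ℝ) (hL₁ : 8 < L₁) :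
    ∃ N : ℕ, N ≤ n ∧ ∃ (Λ : Type) (c : Fin n → Λ),
      (∀ a b : Fin n, c a ≠ c b →
        (L₁ - 4) * (L₁ * n) ^ N * ε₀ < dist (x a) (x b)) ∧
      (∀ a b : Fin n, c a = c b →
        dist (x a) (x b) ≤ 4 * (L₁ * n) ^ N * ε₀) := by
  have : Nonempty (Fin n) := ⟨⟨0, hn⟩⟩
  have hρ : 1 ≤ L₁ * n := by nlinarith [show (1 : ℝ) ≤ n from mod_cast hn]
  set G : ℕ → SimpleGraph (Fin n) := fun k ↦ distGraph x (L₁ * ((L₁ * n) ^ k * ε₀))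
  have hG : Monotone G := fun _ _ hkl ↦ distGraph_mono x (by gcongr)
  obtain ⟨N, hN, hreach⟩ := exists_lt_card_reachable_of_reachable_succ hG
  rw [Nat.card_fin] at hN
  refine ⟨N + 1, hN, _, (G N).connectedComponentMk, fun a b hab ↦ ?_, fun a b hab ↦ ?_⟩
  · have hfar := lt_dist_of_not_reachable_distGraph fun h ↦
      hab (ConnectedComponent.sound (hreach a b h))
    calc (L₁ - 4) * (L₁ * n) ^ (N + 1) * ε₀ < L₁ * ((L₁ * n) ^ (N + 1) * ε₀) := by
          nlinarith [pow_pos (by linarith : (0 : ℝ) < L₁ * n) (N + 1)]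
      _ < dist (x a) (x b) := hfar
  · have hclose := dist_le_of_reachable_distGraph (by positivity) (ConnectedComponent.exact hab)
    rw [Nat.card_fin] at hclose
    calc dist (x a) (x b) ≤ n * (L₁ * ((L₁ * n) ^ N * ε₀)) := hclose
      _ = 1 * (L₁ * n) ^ (N + 1) * ε₀ := by ring
      _ ≤ 4 * (L₁ * n) ^ (N + 1) * ε₀ := by gcongr; norm_num
end

section
/- For every C₀ > 0 there exists ε₁ > 0, depending only on C₀, with the following property. Let R > 0 and let g : {w ∈ ℂ : |w| > R} → ℝ be a C^∞ function with g ≥ 0 such that (∂_x² + ∂_y²) g ≥ 4·C₀·g on the region (equivalently −∂_w∂_{w̄} g ≤ −C₀·g), and suppose there exist K > 0 and N > 0 with g(w) ≤ K·|w|^N for all |w| > R. Then there exist R' ≥ R and K' > 0 such that g(w) ≤ K'·exp(−ε₁·|w|) for all |w| ≥ R'. -/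
/-!
Comparison with explicit barriers. For `c > 0` the operator `Δ - c` obeys a maximum principle:
on a compact region, a smooth `g` with `Δg ≥ c g` stays below every smooth `b` with
`Δb ≤ c b` that dominates it on the boundary. Plane waves `exp ⟪u, ·⟫` and `cosh ⟪u, ·⟫` with
`‖u‖² ≤ c` are such supersolutions; here `c = 4 C₀` and `ε = 2 √C₀`.

First, on the annulus `R₁ ≤ ‖w‖ ≤ ρ` the barrier `M + δ (cosh (ε x) + cosh (ε y))`, with
`δ ≈ K ρ ^ N exp (-ε ρ / 2)` absorbing the polynomial bound on the outer circle, shows as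
`ρ → ∞` that `g` is bounded by its bound `M` on the inner circle. Then, in coordinates
`T + i S = v * conj a` rotating `w` onto the positive real axis, on the rectangle
`R₁ ≤ T ≤ ρ, |S| ≤ ρ` the barrier `M exp (-ε (T - R₁)) + δ (exp (ε T) + cosh (ε S))` with
`δ = 2 M exp (-ε ρ)` gives `g w ≤ M exp (-ε (‖w‖ - R₁))` as `ρ → ∞`.
-/

noncomputable section

/-- Second derivative of `g : ℂ → ℝ` in the direction of the real axis:
`∂ₓ² g (w) = (d/ds)² g(w + s) |_{s=0}`. -/
def d2x (g : ℂ → ℝ) (w : ℂ) : ℝ := deriv (deriv fun s : ℝ => g (w + s)) 0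

/-- Second derivative of `g : ℂ → ℝ` in the direction of the imaginary axis:
`∂_y² g (w) = (d/ds)² g(w + s i) |_{s=0}`. -/
def d2y (g : ℂ → ℝ) (w : ℂ) : ℝ := deriv (deriv fun s : ℝ => g (w + s * Complex.I)) 0

open Real Filter Topology Set ComplexConjugate

theorem IsLocalMax.deriv_deriv_nonpos {f : ℝ → ℝ} {x : ℝ} (h : IsLocalMax f x)
    (hf : ContinuousAt f x) : deriv (deriv f) x ≤ 0 := by
  by_contra! hpos
  -- by the second derivative test `x` would also be a local minimum, so `f` is locally constant
  have hconst : f =ᶠ[𝓝 x] fun _ => f x :=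
    ((isLocalMin_of_deriv_deriv_pos hpos h.deriv_eq_zero hf).and h).mono
      fun y hy => le_antisymm hy.2 hy.1
  have : deriv f =ᶠ[𝓝 x] fun _ => 0 := by
    simpa using hconst.deriv
  rw [this.deriv_eq, deriv_const] at hpos
  exact hpos.false

theorem deriv_deriv_add {f h : ℝ → ℝ} {x : ℝ} (hf : ContDiffAt ℝ 2 f x)
    (hh : ContDiffAt ℝ 2 h x) :
    deriv (deriv fun s => f s + h s) x = deriv (deriv f) x + deriv (deriv h) x := by
  have hderiv : deriv (fun s => f s + h s) =ᶠ[𝓝 x] fun s => deriv f s + deriv h s := by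
    filter_upwards [hf.eventually (by simp), hh.eventually (by simp)] with y hfy hhy
    exact deriv_add (hfy.differentiableAt (by simp)) (hhy.differentiableAt (by simp))
  rw [hderiv.deriv_eq]
  exact deriv_add ((hf.derivWithin (m := 1) (by norm_num)).differentiableAt one_ne_zero)
    ((hh.derivWithin (m := 1) (by norm_num)).differentiableAt one_ne_zero)

-- No differentiability is needed: where `φ` is not differentiable both sides are `0`.
theorem deriv_comp_add_mul (φ : ℝ → ℝ) (α β t : ℝ) :
    deriv (fun s => φ (α + s * β)) t = β * deriv φ (α + t * β) := by
  have := deriv_comp_mul_left β (fun s => φ (α + s)) t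
  simp only [deriv_comp_const_add, smul_eq_mul] at this
  simpa [mul_comm] using this

theorem deriv_deriv_comp_add_mul (φ : ℝ → ℝ) (α β t : ℝ) :
    deriv (deriv fun s => φ (α + s * β)) t = β ^ 2 * deriv (deriv φ) (α + t * β) := by
  simp only [funext (deriv_comp_add_mul φ α β), deriv_const_mul_field', deriv_comp_add_mul]
  ring

section SecondDirDeriv

variable {E : Type*} [NormedAddCommGroup E] [NormedSpace ℝ E]

def secondDirDeriv (g : E → ℝ) (w v : E) : ℝ := deriv (deriv fun s : ℝ => g (w + s • v)) 0

theorem ContDiffAt.comp_add_smul {n : WithTop ℕ∞} {g : E → ℝ} {w : E}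
    (hg : ContDiffAt ℝ n g w) (v : E) : ContDiffAt ℝ n (fun s : ℝ => g (w + s • v)) 0 :=
  ContDiffAt.comp (g := g) (0 : ℝ) (by simpa using hg) (by fun_prop)

theorem IsLocalMax.secondDirDeriv_nonpos {g : E → ℝ} {w : E} (h : IsLocalMax g w)
    (hg : ContinuousAt g w) (v : E) : secondDirDeriv g w v ≤ 0 := by
  have hline : ContinuousAt (fun s : ℝ => w + s • v) 0 := by fun_prop
  refine IsLocalMax.deriv_deriv_nonpos ?_ ?_
  · exact IsLocalMax.comp_continuous (g := fun s : ℝ => w + s • v) (by simpa using h) hline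
  · exact ContinuousAt.comp (g := g) (by simpa using hg) hline

theorem secondDirDeriv_add {f h : E → ℝ} {w : E} (hf : ContDiffAt ℝ 2 f w)
    (hh : ContDiffAt ℝ 2 h w) (v : E) :
    secondDirDeriv (fun x => f x + h x) w v = secondDirDeriv f w v + secondDirDeriv h w v :=
  deriv_deriv_add (hf.comp_add_smul v) (hh.comp_add_smul v)

theorem secondDirDeriv_const_mul (k : ℝ) (f : E → ℝ) (w v : E) :
    secondDirDeriv (fun x => k * f x) w v = k * secondDirDeriv f w v := by
  simp only [secondDirDeriv, deriv_const_mul_field']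

theorem secondDirDeriv_sub {f h : E → ℝ} {w : E} (hf : ContDiffAt ℝ 2 f w)
    (hh : ContDiffAt ℝ 2 h w) (v : E) :
    secondDirDeriv (fun x => f x - h x) w v = secondDirDeriv f w v - secondDirDeriv h w v := by
  have := secondDirDeriv_add hf (hh.const_smul (-1 : ℝ)) v
  simp only [smul_eq_mul] at this
  rw [secondDirDeriv_const_mul] at this
  simpa [sub_eq_add_neg] using this

theorem secondDirDeriv_comp_inner {F : Type*} [NormedAddCommGroup F] [InnerProductSpace ℝ F]
    (φ : ℝ → ℝ) (u w v : F) :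
    secondDirDeriv (fun x => φ (inner ℝ u x)) w v
      = inner ℝ u v ^ 2 * deriv (deriv φ) (inner ℝ u w) := by
  simp only [secondDirDeriv, inner_add_right, real_inner_smul_right]
  rw [deriv_deriv_comp_add_mul]
  simp

end SecondDirDeriv

def planarLaplacian (g : ℂ → ℝ) (w : ℂ) : ℝ := d2x g w + d2y g w

theorem planarLaplacian_eq_secondDirDeriv (g : ℂ → ℝ) (w : ℂ) :
    planarLaplacian g w = secondDirDeriv g w 1 + secondDirDeriv g w Complex.I := by
  simp [planarLaplacian, d2x, d2y, secondDirDeriv, Complex.real_smul]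

theorem planarLaplacian_add {f h : ℂ → ℝ} {w : ℂ} (hf : ContDiffAt ℝ 2 f w)
    (hh : ContDiffAt ℝ 2 h w) :
    planarLaplacian (fun x => f x + h x) w = planarLaplacian f w + planarLaplacian h w := by
  simp only [planarLaplacian_eq_secondDirDeriv, secondDirDeriv_add hf hh]
  ring

theorem planarLaplacian_sub {f h : ℂ → ℝ} {w : ℂ} (hf : ContDiffAt ℝ 2 f w)
    (hh : ContDiffAt ℝ 2 h w) :
    planarLaplacian (fun x => f x - h x) w = planarLaplacian f w - planarLaplacian h w := by
  simp only [planarLaplacian_eq_secondDirDeriv, secondDirDeriv_sub hf hh]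
  ring

theorem planarLaplacian_const_mul (k : ℝ) (f : ℂ → ℝ) (w : ℂ) :
    planarLaplacian (fun x => k * f x) w = k * planarLaplacian f w := by
  simp only [planarLaplacian_eq_secondDirDeriv, secondDirDeriv_const_mul]
  ring

theorem planarLaplacian_const (M : ℝ) (w : ℂ) : planarLaplacian (fun _ => M) w = 0 := by
  simp [planarLaplacian_eq_secondDirDeriv, secondDirDeriv]

theorem planarLaplacian_comp_inner (φ : ℝ → ℝ) (u w : ℂ) :
    planarLaplacian (fun x => φ (inner ℝ u x)) w = ‖u‖ ^ 2 * deriv (deriv φ) (inner ℝ u w) := by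
  simp only [planarLaplacian_eq_secondDirDeriv, secondDirDeriv_comp_inner, Complex.sq_norm,
    Complex.normSq_apply]
  simp [Complex.inner]
  ring

theorem IsLocalMax.planarLaplacian_nonpos {g : ℂ → ℝ} {w : ℂ} (h : IsLocalMax g w)
    (hg : ContinuousAt g w) : planarLaplacian g w ≤ 0 := by
  rw [planarLaplacian_eq_secondDirDeriv]
  linarith [h.secondDirDeriv_nonpos hg 1, h.secondDirDeriv_nonpos hg Complex.I]

/-- Supersolution of `(-Δ + c) b ≥ 0` on the whole plane. -/
def IsSupersolution (c : ℝ) (b : ℂ → ℝ) : Prop :=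
  ContDiff ℝ 2 b ∧ ∀ w, planarLaplacian b w ≤ c * b w

theorem IsSupersolution.add {c : ℝ} {f h : ℂ → ℝ} (hf : IsSupersolution c f)
    (hh : IsSupersolution c h) : IsSupersolution c fun x => f x + h x := by
  refine ⟨hf.1.add hh.1, fun w => ?_⟩
  rw [planarLaplacian_add hf.1.contDiffAt hh.1.contDiffAt, mul_add]
  exact add_le_add (hf.2 w) (hh.2 w)

theorem IsSupersolution.const_mul {c k : ℝ} {f : ℂ → ℝ} (hf : IsSupersolution c f)
    (hk : 0 ≤ k) : IsSupersolution c fun x => k * f x := by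
  refine ⟨contDiff_const.mul hf.1, fun w => ?_⟩
  rw [planarLaplacian_const_mul, mul_left_comm]
  exact mul_le_mul_of_nonneg_left (hf.2 w) hk

theorem isSupersolution_const {c M : ℝ} (hc : 0 ≤ c) (hM : 0 ≤ M) :
    IsSupersolution c fun _ => M :=
  ⟨contDiff_const, fun w => by rw [planarLaplacian_const]; positivity⟩

theorem isSupersolution_comp_inner {c : ℝ} {φ : ℝ → ℝ} {u : ℂ} (hφ : ContDiff ℝ 2 φ)
    (hφ'' : deriv (deriv φ) = φ) (hφ0 : ∀ t, 0 ≤ φ t) (hu : ‖u‖ ^ 2 ≤ c) :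
    IsSupersolution c fun x => φ (inner ℝ u x) := by
  refine ⟨hφ.comp (contDiff_const.inner ℝ contDiff_id), fun w => ?_⟩
  rw [planarLaplacian_comp_inner, hφ'']
  exact mul_le_mul_of_nonneg_right hu (hφ0 _)

theorem isSupersolution_exp_inner {c : ℝ} {u : ℂ} (hu : ‖u‖ ^ 2 ≤ c) :
    IsSupersolution c fun x => exp (inner ℝ u x) :=
  isSupersolution_comp_inner contDiff_exp (by simp) (fun t => (exp_pos t).le) hu

theorem isSupersolution_cosh_inner {c : ℝ} {u : ℂ} (hu : ‖u‖ ^ 2 ≤ c) :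
    IsSupersolution c fun x => cosh (inner ℝ u x) :=
  isSupersolution_comp_inner contDiff_cosh (by simp) (fun t => (cosh_pos t).le) hu

theorem IsSupersolution.le_of_le_on_frontier {c : ℝ} {U D : Set ℂ} {g b : ℂ → ℝ}
    (hb : IsSupersolution c b) (hc : 0 < c) (hU : IsOpen U) (hg : ContDiffOn ℝ 2 g U)
    (hsub : ∀ w ∈ U, c * g w ≤ planarLaplacian g w) (hD : IsCompact D) (hDU : D ⊆ U)
    (hbd : ∀ w ∈ frontier D, g w ≤ b w) : ∀ w ∈ D, g w ≤ b w := by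
  intro w hw
  obtain ⟨p, hpD, hmax⟩ := hD.exists_isMaxOn ⟨w, hw⟩
    ((hg.continuousOn.mono hDU).sub hb.1.continuous.continuousOn)
  suffices g p ≤ b p by
    have : g w - b w ≤ g p - b p := hmax hw
    linarith
  by_cases hp : p ∈ frontier D
  · exact hbd p hp
  have hpD' : D ∈ 𝓝 p := by
    rw [hD.isClosed.frontier_eq] at hp
    exact mem_interior_iff_mem_nhds.mp (by simpa [hpD] using hp)
  have hgp : ContDiffAt ℝ 2 g p := hg.contDiffAt (hU.mem_nhds (hDU hpD))
  -- at an interior maximum, `c (g - b) ≤ Δ (g - b) ≤ 0`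
  have hlap : planarLaplacian (fun x => g x - b x) p ≤ 0 :=
    (hmax.isLocalMax hpD').planarLaplacian_nonpos
      (hgp.continuousAt.sub hb.1.continuous.continuousAt)
  rw [planarLaplacian_sub hgp hb.1.contDiffAt] at hlap
  refine le_of_mul_le_mul_left ?_ hc
  linarith [hsub p (hDU hpD), hb.2 p]

theorem exp_abs_le_two_mul_cosh (t : ℝ) : exp |t| ≤ 2 * cosh t := by
  rw [← cosh_abs, cosh_eq]
  linarith [exp_pos (-|t|)]

theorem exp_mul_norm_div_two_le (ε : ℝ) (hε : 0 ≤ ε) (v : ℂ) :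
    exp (ε * ‖v‖ / 2) ≤ 2 * (cosh (ε * v.re) + cosh (ε * v.im)) := by
  have hv := Complex.norm_le_abs_re_add_abs_im v
  rcases le_total |v.im| |v.re| with h | h
  · calc exp (ε * ‖v‖ / 2) ≤ exp |ε * v.re| := by
          rw [abs_mul, abs_of_nonneg hε]; gcongr; nlinarith
      _ ≤ 2 * cosh (ε * v.re) := exp_abs_le_two_mul_cosh _
      _ ≤ _ := by linarith [cosh_pos (ε * v.im)]
  · calc exp (ε * ‖v‖ / 2) ≤ exp |ε * v.im| := by
          rw [abs_mul, abs_of_nonneg hε]; gcongr; nlinarith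
      _ ≤ 2 * cosh (ε * v.im) := exp_abs_le_two_mul_cosh _
      _ ≤ _ := by linarith [cosh_pos (ε * v.re)]

theorem norm_smul_sq_le {E : Type*} [NormedAddCommGroup E] [NormedSpace ℝ E] {c ε : ℝ} {u : E}
    (hu : ‖u‖ = 1) (hεc : ε ^ 2 ≤ c) :
    ‖ε • u‖ ^ 2 ≤ c := by
  simpa [norm_smul, hu, sq_abs] using hεc

theorem Complex.real_inner_smul_eq_re_mul_conj (ε : ℝ) (a v : ℂ) :
    inner ℝ (ε • a) v = ε * (v * conj a).re := by
  simp [Complex.inner]; ring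

theorem Complex.real_inner_smul_mul_I_eq_im_mul_conj (ε : ℝ) (a v : ℂ) :
    inner ℝ (ε • (a * Complex.I)) v = ε * (v * conj a).im := by
  simp [Complex.inner]; ring

def coshBarrier (M δ ε : ℝ) (v : ℂ) : ℝ := M + δ * cosh (ε * v.re) + δ * cosh (ε * v.im)

theorem isSupersolution_coshBarrier {c M δ ε : ℝ} (hc : 0 ≤ c) (hεc : ε ^ 2 ≤ c) (hM : 0 ≤ M)
    (hδ : 0 ≤ δ) : IsSupersolution c (coshBarrier M δ ε) := by
  have hb : IsSupersolution c fun v =>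
      M + δ * cosh (inner ℝ (ε • (1 : ℂ)) v) + δ * cosh (inner ℝ (ε • Complex.I) v) :=
    ((isSupersolution_const hc hM).add
      ((isSupersolution_cosh_inner (norm_smul_sq_le norm_one hεc)).const_mul hδ)).add
      ((isSupersolution_cosh_inner (norm_smul_sq_le Complex.norm_I hεc)).const_mul hδ)
  convert hb using 1
  ext v
  simp [coshBarrier, Complex.inner, mul_comm]

theorem le_coshBarrier {M δ ε : ℝ} (hδ : 0 ≤ δ) (v : ℂ) : M ≤ coshBarrier M δ ε v := by
  have := mul_nonneg hδ (cosh_pos (ε * v.re)).le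
  have := mul_nonneg hδ (cosh_pos (ε * v.im)).le
  simp only [coshBarrier]
  linarith

theorem le_coshBarrier_of_norm_eq {K N M ε ρ : ℝ} {v : ℂ} (hK : 0 ≤ K) (hM : 0 ≤ M)
    (hε : 0 ≤ ε) (hρ : 0 ≤ ρ) (hv : ‖v‖ = ρ) :
    K * ρ ^ N ≤ coshBarrier M (2 * K * ρ ^ N * exp (-(ε * ρ / 2))) ε v := by
  have hcosh := exp_mul_norm_div_two_le ε hε v
  rw [hv] at hcosh
  have hweight : 2 * K * ρ ^ N * exp (-(ε * ρ / 2)) * exp (ε * ρ / 2) = 2 * (K * ρ ^ N) := by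
    rw [mul_assoc, ← exp_add]; simp; ring
  have := mul_le_mul_of_nonneg_left hcosh
    (by positivity : 0 ≤ 2 * K * ρ ^ N * exp (-(ε * ρ / 2)))
  simp only [coshBarrier]
  linarith

def decayBarrier (A δ ε : ℝ) (a v : ℂ) : ℝ :=
  A * exp (-ε * (v * conj a).re) + δ * exp (ε * (v * conj a).re) + δ * cosh (ε * (v * conj a).im)

theorem isSupersolution_decayBarrier {c A δ ε : ℝ} {a : ℂ} (ha : ‖a‖ = 1) (hεc : ε ^ 2 ≤ c)
    (hA : 0 ≤ A) (hδ : 0 ≤ δ) : IsSupersolution c (decayBarrier A δ ε a) := by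
  have haI : ‖a * Complex.I‖ = 1 := by rw [norm_mul, Complex.norm_I, ha, mul_one]
  have hb : IsSupersolution c fun v => A * exp (inner ℝ ((-ε) • a) v)
      + δ * exp (inner ℝ (ε • a) v) + δ * cosh (inner ℝ (ε • (a * Complex.I)) v) :=
    (((isSupersolution_exp_inner (norm_smul_sq_le ha (neg_sq ε ▸ hεc))).const_mul hA).add
      ((isSupersolution_exp_inner (norm_smul_sq_le ha hεc)).const_mul hδ)).add
      ((isSupersolution_cosh_inner (norm_smul_sq_le haI hεc)).const_mul hδ)
  simp only [Complex.real_inner_smul_mul_I_eq_im_mul_conj] at hb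
  simp only [Complex.real_inner_smul_eq_re_mul_conj] at hb
  exact hb

theorem le_decayBarrier {M ε R₁ ρ : ℝ} {a v : ℂ} (hM : 0 ≤ M) (hε : 0 ≤ ε)
    (hv : |(v * conj a).im| = ρ ∨ (v * conj a).re = R₁ ∨ (v * conj a).re = ρ) :
    M ≤ decayBarrier (M * exp (ε * R₁)) (2 * M * exp (-(ε * ρ))) ε a v := by
  have hweight : 2 * M * exp (-(ε * ρ)) * exp (ε * ρ) = 2 * M := by
    rw [mul_assoc, ← exp_add]; simp
  have hX : 0 ≤ M * exp (ε * R₁) * exp (-ε * (v * conj a).re) := by positivity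
  have hY : 0 ≤ 2 * M * exp (-(ε * ρ)) * exp (ε * (v * conj a).re) := by positivity
  have hZ : 0 ≤ 2 * M * exp (-(ε * ρ)) * cosh (ε * (v * conj a).im) := by positivity
  simp only [decayBarrier]
  rcases hv with hS | hT | hT
  · have hcosh := exp_abs_le_two_mul_cosh (ε * (v * conj a).im)
    rw [abs_mul, abs_of_nonneg hε, hS] at hcosh
    have := mul_le_mul_of_nonneg_left hcosh (by positivity : 0 ≤ 2 * M * exp (-(ε * ρ)))
    linarith
  · have : M * exp (ε * R₁) * exp (-ε * (v * conj a).re) = M := by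
      rw [hT, mul_assoc, ← exp_add]; simp
    linarith
  · have : 2 * M * exp (-(ε * ρ)) * exp (ε * (v * conj a).re) = 2 * M := by rw [hT, hweight]
    linarith

def rotatedRect (a : ℂ) (R₁ ρ : ℝ) : Set ℂ := (· * conj a) ⁻¹' (Icc R₁ ρ ×ℂ Icc (-ρ) ρ)

theorem isCompact_rotatedRect {a : ℂ} (ha : a ≠ 0) (R₁ ρ : ℝ) :
    IsCompact (rotatedRect a R₁ ρ) :=
  (Homeomorph.mulRight₀ (conj a) (by simpa using ha)).isCompact_preimage.mpr
    (isCompact_Icc.reProdIm isCompact_Icc)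

theorem mem_frontier_rotatedRect {a v : ℂ} (ha : a ≠ 0) {R₁ ρ : ℝ} (hR₁ρ : R₁ ≤ ρ)
    (hρ : 0 ≤ ρ) (hv : v ∈ frontier (rotatedRect a R₁ ρ)) :
    |(v * conj a).im| = ρ ∨ (v * conj a).re = R₁ ∨ (v * conj a).re = ρ := by
  rw [rotatedRect, ← Homeomorph.coe_mulRight₀ (conj a) (by simpa using ha),
    ← Homeomorph.preimage_frontier, Complex.frontier_reProdIm] at hv
  simp only [closure_Icc, frontier_Icc hR₁ρ, frontier_Icc (neg_le_self hρ), mem_preimage,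
    Homeomorph.coe_mulRight₀, mem_union, Complex.mem_reProdIm, mem_insert_iff,
    mem_singleton_iff] at hv
  rcases hv with ⟨-, hS | hS⟩ | ⟨hT, -⟩
  · exact Or.inl (by rw [hS, abs_neg, abs_of_nonneg hρ])
  · exact Or.inl (by rw [hS, abs_of_nonneg hρ])
  · exact Or.inr hT

theorem Complex.exists_norm_eq_one_mul_conj_eq_norm (w : ℂ) :
    ∃ a : ℂ, ‖a‖ = 1 ∧ w * conj a = ‖w‖ := by
  set e := Complex.exp (w.arg * Complex.I)
  have he : ‖e‖ = 1 := Complex.norm_exp_ofReal_mul_I _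
  refine ⟨e, he, ?_⟩
  calc w * conj e = ‖w‖ * e * conj e := by rw [Complex.norm_mul_exp_arg_mul_I w]
    _ = ‖w‖ := by rw [mul_assoc, Complex.mul_conj, Complex.normSq_eq_norm_sq, he]; simp

theorem le_of_le_on_sphere {c ε R₁ K N M : ℝ} {U : Set ℂ} {g : ℂ → ℝ} (hc : 0 < c)
    (hε : 0 < ε) (hεc : ε ^ 2 ≤ c) (hU : IsOpen U) (hg : ContDiffOn ℝ 2 g U)
    (hsub : ∀ w ∈ U, c * g w ≤ planarLaplacian g w) (hRU : ∀ w, R₁ ≤ ‖w‖ → w ∈ U)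
    (hK : 0 ≤ K) (hgrowth : ∀ w, R₁ ≤ ‖w‖ → g w ≤ K * ‖w‖ ^ N) (hM : 0 ≤ M)
    (hsphere : ∀ w, ‖w‖ = R₁ → g w ≤ M) : ∀ w, R₁ ≤ ‖w‖ → g w ≤ M := by
  intro w hw
  have hlim : Tendsto (fun ρ => coshBarrier M (2 * K * ρ ^ N * exp (-(ε * ρ / 2))) ε w)
      atTop (𝓝 M) := by
    have := (((tendsto_rpow_mul_exp_neg_mul_atTop_nhds_zero N (ε / 2) (by positivity)).const_mul
      (2 * K)).mul_const (cosh (ε * w.re) + cosh (ε * w.im))).const_add M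
    simp only [mul_zero, zero_mul, add_zero] at this
    refine this.congr fun ρ => ?_
    simp only [coshBarrier]; ring_nf
  refine ge_of_tendsto hlim ?_
  filter_upwards [eventually_ge_atTop ‖w‖, eventually_ge_atTop R₁] with ρ hρw hρR
  have hρ : 0 ≤ ρ := (norm_nonneg w).trans hρw
  have hannulus : IsCompact (norm ⁻¹' Icc R₁ ρ : Set ℂ) :=
    (isCompact_closedBall (0 : ℂ) ρ).of_isClosed_subset
      (isClosed_Icc.preimage continuous_norm) fun v hv => by simpa using hv.2
  refine (isSupersolution_coshBarrier hc.le hεc hM (by positivity)).le_of_le_on_frontier hc hU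
    hg hsub hannulus (fun v hv => hRU v hv.1) (fun v hv => ?_) w ⟨hw, hρw⟩
  obtain hv | hv : ‖v‖ = R₁ ∨ ‖v‖ = ρ := by
    simpa [frontier_Icc (hw.trans hρw)] using continuous_norm.frontier_preimage_subset _ hv
  · exact (hsphere v hv).trans (le_coshBarrier (by positivity) v)
  · exact (hgrowth v (by rw [hv]; exact hρR)).trans
      (by rw [hv]; exact le_coshBarrier_of_norm_eq hK hM hε.le hρ hv)

theorem le_mul_exp_of_le {c ε R₁ M : ℝ} {U : Set ℂ} {g : ℂ → ℝ} (hc : 0 < c)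
    (hε : 0 < ε) (hεc : ε ^ 2 ≤ c) (hU : IsOpen U) (hg : ContDiffOn ℝ 2 g U)
    (hsub : ∀ w ∈ U, c * g w ≤ planarLaplacian g w) (hRU : ∀ w, R₁ ≤ ‖w‖ → w ∈ U)
    (hM : 0 ≤ M) (hbdd : ∀ w, R₁ ≤ ‖w‖ → g w ≤ M) :
    ∀ w, R₁ ≤ ‖w‖ → g w ≤ M * exp (-ε * (‖w‖ - R₁)) := by
  intro w hw
  obtain ⟨a, ha, hwa⟩ := Complex.exists_norm_eq_one_mul_conj_eq_norm w
  have ha0 : a ≠ 0 := norm_ne_zero_iff.mp (by simp [ha])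
  have hlim : Tendsto (fun ρ => decayBarrier (M * exp (ε * R₁)) (2 * M * exp (-(ε * ρ))) ε a w)
      atTop (𝓝 (M * exp (-ε * (‖w‖ - R₁)))) := by
    have := (((tendsto_exp_neg_atTop_nhds_zero.comp (tendsto_id.const_mul_atTop hε)).const_mul
      (2 * M)).mul_const (exp (ε * ‖w‖) + 1)).const_add (M * exp (-ε * (‖w‖ - R₁)))
    simp only [mul_zero, zero_mul, add_zero] at this
    refine this.congr fun ρ => ?_
    simp only [decayBarrier, hwa, Complex.ofReal_re, Complex.ofReal_im, mul_zero, cosh_zero,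
      Function.comp_apply, id]
    rw [mul_assoc M, ← exp_add]; ring_nf
  refine ge_of_tendsto hlim ?_
  filter_upwards [eventually_ge_atTop ‖w‖] with ρ hρ
  have hρ0 : 0 ≤ ρ := (norm_nonneg w).trans hρ
  have hDU : ∀ v ∈ rotatedRect a R₁ ρ, R₁ ≤ ‖v‖ := fun v hv =>
    hv.1.1.trans (by simpa [ha] using Complex.re_le_norm (v * conj a))
  have hb := isSupersolution_decayBarrier ha hεc (A := M * exp (ε * R₁))
    (δ := 2 * M * exp (-(ε * ρ))) (by positivity) (by positivity)
  refine hb.le_of_le_on_frontier hc hU hg hsub (isCompact_rotatedRect ha0 R₁ ρ)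
    (fun v hv => hRU v (hDU v hv)) (fun v hv => ?_) w (by simp [rotatedRect, hwa, Complex.mem_reProdIm, hw, hρ, hρ0])
  exact (hbdd v (hDU v ((isCompact_rotatedRect ha0 R₁ ρ).isClosed.frontier_subset hv))).trans
    (le_decayBarrier hM hε.le (mem_frontier_rotatedRect ha0 (hw.trans hρ) hρ0 hv))

/-- Ahlfors-type lemma (Lemma 17.10.7.300 of the paper): a nonnegative smooth function of
polynomial growth on a neighbourhood of infinity in `ℂ` satisfying
`−∂_w ∂_w̄ g ≤ −C₀ g` (equivalently `(∂ₓ² + ∂_y²) g ≥ 4 C₀ g`) decays exponentially. -/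
theorem ahlfors_exponential_decay (C₀ : ℝ) (hC₀ : 0 < C₀) :
    ∃ ε₁ > (0 : ℝ),
      ∀ R : ℝ, 0 < R → ∀ g : ℂ → ℝ,
        ContDiffOn ℝ (⊤ : ℕ∞) g {w : ℂ | R < ‖w‖} →
        (∀ w : ℂ, R < ‖w‖ → 0 ≤ g w) →
        (∀ w : ℂ, R < ‖w‖ → 4 * C₀ * g w ≤ d2x g w + d2y g w) →
        (∃ K > (0 : ℝ), ∃ N > (0 : ℝ), ∀ w : ℂ, R < ‖w‖ →
          g w ≤ K * ‖w‖ ^ N) →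
        ∃ R' ≥ R, ∃ K' > (0 : ℝ), ∀ w : ℂ, R' ≤ ‖w‖ →
          g w ≤ K' * Real.exp (-ε₁ * ‖w‖) := by
  refine ⟨2 * √C₀, by positivity, ?_⟩
  rintro R hR g hg - hsub ⟨K, hK, N, -, hgrowth⟩
  have hε : (2 * √C₀) ^ 2 = 4 * C₀ := by rw [mul_pow, sq_sqrt hC₀.le]; ring
  have hc : 0 < 4 * C₀ := by positivity
  have hU : IsOpen {w : ℂ | R < ‖w‖} := isOpen_lt continuous_const continuous_norm
  have hg2 : ContDiffOn ℝ 2 g {w : ℂ | R < ‖w‖} := hg.of_le (WithTop.coe_le_coe.mpr le_top)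
  have hRU : ∀ w : ℂ, R + 1 ≤ ‖w‖ → w ∈ {w : ℂ | R < ‖w‖} := fun w hw =>
    show R < ‖w‖ by linarith
  have hbdd := le_of_le_on_sphere (M := K * (R + 1) ^ N) hc (by positivity) hε.le hU hg2 hsub
    hRU hK.le (fun w hw => hgrowth w (hRU w hw)) (by positivity)
    (fun w hw => by rw [← hw]; exact hgrowth w (hRU w hw.ge))
  have hdecay := le_mul_exp_of_le hc (by positivity) hε.le hU hg2 hsub hRU (by positivity) hbdd
  refine ⟨R + 1, by linarith, K * (R + 1) ^ N * exp (2 * √C₀ * (R + 1)), by positivity,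
    fun w hw => (hdecay w hw).trans_eq ?_⟩
  rw [mul_assoc (K * (R + 1) ^ N), ← exp_add]
  ring_nf
end
end

section
/- Let R > 0, c > 0, N > 0 and K > 0. Let g : {w ∈ ℂ : |w| > R} → ℝ be a C^∞ function with g ≥ 0 such that: (i) g(w) ≤ K·|w|^N for all |w| > R; and (ii) for every k > 0 there exists b_k > 0 with −∂_w∂_{w̄} g ≤ b_k·|w|^{−k} + (−c + |w|^{−2})·g on {|w| > R}. Then for every k > 0 there exist R_k ≥ R and K_k > 0 such that g(w) ≤ K_k·|w|^{−k} for all |w| ≥ R_k. -/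
noncomputable section

/-!
Fix `k` and compare `g` with the barrier `B = M‖w‖^(-k) + ε‖w‖^(N+1)` on annuli
`R₁ ≤ ‖w‖ ≤ S`. The Laplacian of `‖w‖^a` is `a²‖w‖^(a-2)`, so for `‖w‖ ≥ R₁` large
`-¼ΔB ≥ -(c/4)B`, while `b ≤ cM/2` pushes the right side of the differential inequality strictly
below `-(c/4)B` wherever `g > B`. Hence `g - B` has no positive interior local maximum, at which
`Δg ≤ ΔB`. On the inner circle `M ≥ K R₁^(N+k)` beats the growth bound and on the outer one
`S ≥ K/ε` lets `ε‖w‖^(N+1)` beat it, so `g ≤ B` on the annulus; letting `ε → 0` gives the decay.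
-/
open Filter Topology Set

theorem deriv_deriv_nonpos_of_isLocalMax {f : ℝ → ℝ} {x : ℝ} (hmax : IsLocalMax f x)
    (hf : ContinuousAt f x) : deriv (deriv f) x ≤ 0 := by
  by_contra! hpos
  have hmin : IsLocalMin f x := isLocalMin_of_deriv_deriv_pos hpos hmax.deriv_eq_zero hf
  have hconst : f =ᶠ[𝓝 x] fun _ => f x :=
    (hmin.and hmax).mono fun s hs => le_antisymm hs.2 hs.1
  have : deriv f =ᶠ[𝓝 x] fun _ => 0 := by
    simpa using hconst.deriv
  simp [this.deriv_eq] at hpos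

theorem deriv_deriv_eq_iteratedDeriv_two {𝕜 F : Type*} [NontriviallyNormedField 𝕜]
    [NormedAddCommGroup F] [NormedSpace 𝕜 F] (f : 𝕜 → F) :
    deriv (deriv f) = iteratedDeriv 2 f := by
  rw [iteratedDeriv_succ, iteratedDeriv_one]

theorem deriv_deriv_le_of_isLocalMax_sub {φ ψ : ℝ → ℝ} {x : ℝ} (hφ : ContDiffAt ℝ 2 φ x)
    (hψ : ContDiffAt ℝ 2 ψ x) (hmax : IsLocalMax (fun s => φ s - ψ s) x) :
    deriv (deriv φ) x ≤ deriv (deriv ψ) x := by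
  have := deriv_deriv_nonpos_of_isLocalMax hmax (hφ.continuousAt.sub hψ.continuousAt)
  simp only [deriv_deriv_eq_iteratedDeriv_two] at this ⊢
  rw [iteratedDeriv_fun_sub hφ hψ] at this
  linarith

theorem deriv_deriv_const_mul_add_const_mul {φ ψ : ℝ → ℝ} {x : ℝ} (hφ : ContDiffAt ℝ 2 φ x)
    (hψ : ContDiffAt ℝ 2 ψ x) (a b : ℝ) :
    deriv (deriv fun s => a * φ s + b * ψ s) x = a * deriv (deriv φ) x + b * deriv (deriv ψ) x := by
  simp only [deriv_deriv_eq_iteratedDeriv_two]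
  rw [iteratedDeriv_fun_add (contDiffAt_const.mul hφ) (contDiffAt_const.mul hψ),
    iteratedDeriv_const_mul a hφ, iteratedDeriv_const_mul b hψ]

theorem deriv_deriv_sq_add_sq_rpow {x y : ℝ} (α : ℝ) (h : 0 < x ^ 2 + y ^ 2) :
    deriv (deriv fun s => ((x + s) ^ 2 + y ^ 2) ^ α) 0 =
      2 * α * (x ^ 2 + y ^ 2) ^ (α - 1) +
        4 * α * (α - 1) * x ^ 2 * (x ^ 2 + y ^ 2) ^ (α - 2) := by
  have hQ : ∀ s : ℝ, HasDerivAt (fun s => (x + s) ^ 2 + y ^ 2) (2 * (x + s)) s := fun s => by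
    simpa using (((hasDerivAt_id s).const_add x).pow 2).add_const (y ^ 2)
  have hQ0 : ∀ᶠ s in 𝓝 (0 : ℝ), (x + s) ^ 2 + y ^ 2 ≠ 0 :=
    (hQ 0).continuousAt.eventually_ne (by simpa using h.ne')
  have hderiv : deriv (fun s => ((x + s) ^ 2 + y ^ 2) ^ α) =ᶠ[𝓝 0]
      fun s => 2 * α * ((x + s) * ((x + s) ^ 2 + y ^ 2) ^ (α - 1)) :=
    hQ0.mono fun s hs => by
      rw [((hQ s).rpow_const (Or.inl hs)).deriv]
      ring
  rw [hderiv.deriv_eq]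
  have h1 : HasDerivAt (fun s => (x + s) * ((x + s) ^ 2 + y ^ 2) ^ (α - 1))
      (1 * (x ^ 2 + y ^ 2) ^ (α - 1) + x * (2 * x * (α - 1) * (x ^ 2 + y ^ 2) ^ (α - 2))) 0 := by
    have := ((hasDerivAt_id (0 : ℝ)).const_add x).fun_mul
      ((hQ 0).rpow_const (p := α - 1) (Or.inl (by simpa using h.ne')))
    simpa only [id, add_zero, sub_sub, one_add_one_eq_two] using this
  rw [(h1.const_mul (2 * α)).deriv]
  ring

section DirectionalSecondDerivatives

variable {f g h : ℂ → ℝ} {w : ℂ}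

theorem d2x_eq_deriv_deriv_mul_one (g : ℂ → ℝ) (w : ℂ) :
    d2x g w = deriv (deriv fun s : ℝ => g (w + s * 1)) 0 := by
  simp only [d2x, mul_one]

theorem ContDiffAt.comp_add_ofReal_mul {n : WithTop ℕ∞} (hg : ContDiffAt ℝ n g w) (v : ℂ) :
    ContDiffAt ℝ n (fun s : ℝ => g (w + s * v)) 0 := by
  have hline : ContDiff ℝ n fun s : ℝ => w + s * v :=
    contDiff_const.add (Complex.ofRealCLM.contDiff.mul contDiff_const)
  exact ContDiffAt.comp (g := g) 0 (by simpa using hg) hline.contDiffAt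

theorem IsLocalMax.comp_add_ofReal_mul (hf : IsLocalMax f w) (v : ℂ) :
    IsLocalMax (fun s : ℝ => f (w + s * v)) 0 := by
  have hline : Continuous fun s : ℝ => w + s * v := by fun_prop
  exact IsLocalMax.comp_continuous (f := f) (by simpa using hf) hline.continuousAt

theorem deriv_deriv_comp_add_ofReal_mul_le_of_isLocalMax_sub (hg : ContDiffAt ℝ 2 g w)
    (hh : ContDiffAt ℝ 2 h w) (hmax : IsLocalMax (fun z => g z - h z) w) (v : ℂ) :
    deriv (deriv fun s : ℝ => g (w + s * v)) 0 ≤ deriv (deriv fun s : ℝ => h (w + s * v)) 0 :=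
  deriv_deriv_le_of_isLocalMax_sub (hg.comp_add_ofReal_mul v) (hh.comp_add_ofReal_mul v)
    (hmax.comp_add_ofReal_mul v)

theorem d2x_add_d2y_le_of_isLocalMax_sub (hg : ContDiffAt ℝ 2 g w) (hh : ContDiffAt ℝ 2 h w)
    (hmax : IsLocalMax (fun z => g z - h z) w) :
    d2x g w + d2y g w ≤ d2x h w + d2y h w := by
  rw [d2x_eq_deriv_deriv_mul_one g, d2x_eq_deriv_deriv_mul_one h]
  exact add_le_add (deriv_deriv_comp_add_ofReal_mul_le_of_isLocalMax_sub hg hh hmax 1)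
    (deriv_deriv_comp_add_ofReal_mul_le_of_isLocalMax_sub hg hh hmax Complex.I)

theorem norm_rpow_eq_re_sq_add_im_sq_rpow (z : ℂ) (a : ℝ) :
    ‖z‖ ^ a = (z.re ^ 2 + z.im ^ 2) ^ (a / 2) := by
  rw [Complex.norm_eq_sqrt_sq_add_sq, Real.sqrt_eq_rpow, ← Real.rpow_mul (by positivity)]
  ring_nf

theorem d2x_add_d2y_norm_rpow (hw : w ≠ 0) (a : ℝ) :
    d2x (‖·‖ ^ a) w + d2y (‖·‖ ^ a) w = a ^ 2 * ‖w‖ ^ (a - 2) := by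
  have hQ : 0 < w.re ^ 2 + w.im ^ 2 := by
    simpa [Complex.norm_eq_sqrt_sq_add_sq] using norm_pos_iff.2 hw
  have hx : (fun s : ℝ => ‖w + s‖ ^ a) = fun s => ((w.re + s) ^ 2 + w.im ^ 2) ^ (a / 2) := by
    funext s
    simp [norm_rpow_eq_re_sq_add_im_sq_rpow]
  have hy : (fun s : ℝ => ‖w + s * Complex.I‖ ^ a) =
      fun s => ((w.im + s) ^ 2 + w.re ^ 2) ^ (a / 2) := by
    funext s
    simp [norm_rpow_eq_re_sq_add_im_sq_rpow, add_comm]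
  simp only [d2x, d2y, hx, hy]
  rw [deriv_deriv_sq_add_sq_rpow _ hQ, deriv_deriv_sq_add_sq_rpow _ (by linarith),
    norm_rpow_eq_re_sq_add_im_sq_rpow, add_comm (w.im ^ 2)]
  have hpow : (w.re ^ 2 + w.im ^ 2) ^ (a / 2 - 1) =
      (w.re ^ 2 + w.im ^ 2) ^ (a / 2 - 2) * (w.re ^ 2 + w.im ^ 2) := by
    rw [← Real.rpow_add_one hQ.ne']; ring_nf
  rw [show (a - 2) / 2 = a / 2 - 1 by ring, hpow]
  ring

theorem d2x_add_d2y_const_mul_add_const_mul (hf : ContDiffAt ℝ 2 f w) (hh : ContDiffAt ℝ 2 h w)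
    (a b : ℝ) :
    d2x (fun z => a * f z + b * h z) w + d2y (fun z => a * f z + b * h z) w =
      a * (d2x f w + d2y f w) + b * (d2x h w + d2y h w) := by
  simp only [d2x_eq_deriv_deriv_mul_one, d2y]
  rw [deriv_deriv_const_mul_add_const_mul (hf.comp_add_ofReal_mul 1) (hh.comp_add_ofReal_mul 1),
    deriv_deriv_const_mul_add_const_mul (hf.comp_add_ofReal_mul _) (hh.comp_add_ofReal_mul _)]
  ring

theorem contDiffAt_norm_rpow {n : WithTop ℕ∞} (hw : w ≠ 0) (a : ℝ) :
    ContDiffAt ℝ n (‖·‖ ^ a) w :=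
  (contDiffAt_norm ℝ hw).rpow_const_of_ne (norm_ne_zero_iff.2 hw)

theorem le_of_isLocalMax_sub_norm_rpow_barrier {b c M ε p q : ℝ} (hw : w ≠ 0)
    (hg : ContDiffAt ℝ 2 g w) (hM : 0 ≤ M) (hε : 0 < ε) (hb : b ≤ c * M / 2)
    (hp : ‖w‖ ^ (-(2 : ℝ)) * p ^ 2 ≤ c) (hq : ‖w‖ ^ (-(2 : ℝ)) * q ^ 2 ≤ c)
    (hu : ‖w‖ ^ (-(2 : ℝ)) * 4 ≤ c)
    (hineq : -(1 / 4) * (d2x g w + d2y g w) ≤ b * ‖w‖ ^ p + (-c + ‖w‖ ^ (-(2 : ℝ))) * g w)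
    (hmax : IsLocalMax (fun z => g z - (M * ‖z‖ ^ p + ε * ‖z‖ ^ q)) w) :
    g w ≤ M * ‖w‖ ^ p + ε * ‖w‖ ^ q := by
  have hr : 0 < ‖w‖ := norm_pos_iff.2 hw
  have hΔ := d2x_add_d2y_le_of_isLocalMax_sub hg
    ((contDiffAt_const.mul (contDiffAt_norm_rpow hw p)).add
      (contDiffAt_const.mul (contDiffAt_norm_rpow hw q))) hmax
  rw [d2x_add_d2y_const_mul_add_const_mul (contDiffAt_norm_rpow hw p) (contDiffAt_norm_rpow hw q),
    d2x_add_d2y_norm_rpow hw, d2x_add_d2y_norm_rpow hw, sub_eq_add_neg, sub_eq_add_neg,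
    Real.rpow_add hr, Real.rpow_add hr] at hΔ
  set u := ‖w‖ ^ (-(2 : ℝ))
  set X := ‖w‖ ^ p
  set Y := ‖w‖ ^ q
  have hu0 : 0 < u := Real.rpow_pos_of_pos hr _
  have hMX : 0 ≤ M * X := mul_nonneg hM (Real.rpow_pos_of_pos hr _).le
  have hεY : 0 < ε * Y := mul_pos hε (Real.rpow_pos_of_pos hr _)
  by_contra! hlt
  have hcoef : (-c + u) * g w ≤ (-c + u) * (M * X + ε * Y) :=
    mul_le_mul_of_nonpos_left hlt.le (by linarith)
  linarith [mul_le_mul_of_nonneg_right hp hMX, mul_le_mul_of_nonneg_right hq hεY.le,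
    mul_le_mul_of_nonneg_right hu hMX, mul_le_mul_of_nonneg_right hu hεY.le,
    mul_le_mul_of_nonneg_right hb (Real.rpow_pos_of_pos hr p).le, mul_pos hu0 hεY]

end DirectionalSecondDerivatives

theorem nonpos_on_annulus_of_isLocalMax {E : Type*} [NormedAddCommGroup E] [ProperSpace E]
    {F : E → ℝ} {r₁ r₂ : ℝ} (hF : ContinuousOn F {z | ‖z‖ ∈ Icc r₁ r₂})
    (hinner : ∀ z, ‖z‖ = r₁ → F z ≤ 0) (houter : ∀ z, ‖z‖ = r₂ → F z ≤ 0)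
    (hlocal : ∀ z, ‖z‖ ∈ Ioo r₁ r₂ → IsLocalMax F z → F z ≤ 0)
    {w : E} (hw : ‖w‖ ∈ Icc r₁ r₂) : F w ≤ 0 := by
  have hA : IsCompact {z : E | ‖z‖ ∈ Icc r₁ r₂} :=
    (isCompact_closedBall 0 r₂).of_isClosed_subset (isClosed_Icc.preimage continuous_norm)
      fun z hz => mem_closedBall_zero_iff.2 hz.2
  obtain ⟨z, hz, hmax⟩ := hA.exists_isMaxOn ⟨w, hw⟩ hF
  refine (hmax hw).trans ?_
  rcases hz.1.eq_or_lt with h | h₁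
  · exact hinner z h.symm
  rcases hz.2.eq_or_lt with h | h₂
  · exact houter z h
  have hopen : {y : E | ‖y‖ ∈ Ioo r₁ r₂} ∈ 𝓝 z :=
    (isOpen_Ioo.preimage continuous_norm).mem_nhds ⟨h₁, h₂⟩
  exact hlocal z ⟨h₁, h₂⟩
    (hmax.isLocalMax (mem_of_superset hopen fun y hy => Ioo_subset_Icc_self hy))

theorem eventually_rpow_neg_two_mul_le (a : ℝ) {c : ℝ} (hc : 0 < c) :
    ∀ᶠ r : ℝ in atTop, r ^ (-(2 : ℝ)) * a ≤ c := by
  have := (tendsto_rpow_neg_atTop two_pos).mul_const a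
  rw [zero_mul] at this
  exact (this.eventually_lt_const hc).mono fun _ => le_of_lt

theorem le_norm_rpow_barrier {g : ℂ → ℝ} {R c K N k b M ε R₁ : ℝ}
    (hsm : ContDiffOn ℝ 2 g {w | R < ‖w‖}) (hgrowth : ∀ w : ℂ, R < ‖w‖ → g w ≤ K * ‖w‖ ^ N)
    (hineq : ∀ w : ℂ, R < ‖w‖ → -(1 / 4) * (d2x g w + d2y g w) ≤
      b * ‖w‖ ^ (-k) + (-c + ‖w‖ ^ (-(2 : ℝ))) * g w)
    (hR₁ : ∀ r ≥ R₁, R < r ∧ 0 < r ∧ r ^ (-(2 : ℝ)) * k ^ 2 ≤ c ∧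
      r ^ (-(2 : ℝ)) * (N + 1) ^ 2 ≤ c ∧ r ^ (-(2 : ℝ)) * 4 ≤ c)
    (hM : 0 ≤ M) (hb : b ≤ c * M / 2) (hKM : K * R₁ ^ (N + k) ≤ M) (hε : 0 < ε)
    {w : ℂ} (hw : R₁ ≤ ‖w‖) : g w ≤ M * ‖w‖ ^ (-k) + ε * ‖w‖ ^ (N + 1) := by
  have hR₁0 : 0 < R₁ := (hR₁ R₁ le_rfl).2.1
  have hne : ∀ z : ℂ, R₁ ≤ ‖z‖ → z ≠ 0 := fun z hz =>
    norm_pos_iff.1 (hR₁0.trans_le hz)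
  set S := max (K / ε) ‖w‖
  have hS : 0 < S := hR₁0.trans_le (hw.trans (le_max_right _ _))
  rw [← sub_nonpos]
  refine nonpos_on_annulus_of_isLocalMax
    (F := fun z => g z - (M * ‖z‖ ^ (-k) + ε * ‖z‖ ^ (N + 1))) (r₁ := R₁) (r₂ := S)
    ?_ ?_ ?_ ?_ ⟨hw, le_max_right _ _⟩
  · intro z hz
    have hg : ContinuousAt g z := hsm.continuousOn.continuousAt
      ((isOpen_lt continuous_const continuous_norm).mem_nhds (hR₁ _ hz.1).1)
    have hB : ∀ a : ℝ, ContinuousAt (‖·‖ ^ a) z := fun a =>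
      (contDiffAt_norm_rpow (n := 0) (hne z hz.1) a).continuousAt
    exact (hg.sub ((continuousAt_const.mul (hB _)).add (continuousAt_const.mul (hB _))))
      |>.continuousWithinAt
  · intro z hz
    have hinner : K * R₁ ^ N ≤ M * R₁ ^ (-k) := by
      calc K * R₁ ^ N = K * R₁ ^ (N + k) * R₁ ^ (-k) := by
            rw [mul_assoc, ← Real.rpow_add hR₁0]; ring_nf
        _ ≤ M * R₁ ^ (-k) := by gcongr
    have := hgrowth z (hR₁ _ hz.ge).1
    rw [hz] at this ⊢
    have : 0 ≤ ε * R₁ ^ (N + 1) := by positivity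
    linarith
  · intro z hz
    have houter : K * S ^ N ≤ ε * S ^ (N + 1) := by
      calc K * S ^ N ≤ ε * S * S ^ N := by
            gcongr
            exact (div_le_iff₀' hε).1 (le_max_left _ _)
        _ = ε * S ^ (N + 1) := by rw [Real.rpow_add_one hS.ne']; ring
    have := hgrowth z (hR₁ _ (hz ▸ hw.trans (le_max_right _ _))).1
    rw [hz] at this ⊢
    have : 0 ≤ M * S ^ (-k) := by positivity
    linarith
  · intro z hz hmax
    obtain ⟨hRz, -, hk, hN, h4⟩ := hR₁ _ hz.1.le
    rw [sub_nonpos]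
    exact le_of_isLocalMax_sub_norm_rpow_barrier (hne z hz.1.le)
      (hsm.contDiffAt ((isOpen_lt continuous_const continuous_norm).mem_nhds hRz)) hM hε hb
      (by rwa [neg_sq]) hN h4 (hineq z hRz) hmax

theorem ahlfors_rapid_decay_general (R c N K : ℝ) (hc : 0 < c)
    (g : ℂ → ℝ)
    (hsm : ContDiffOn ℝ (⊤ : ℕ∞) g {w : ℂ | R < ‖w‖})
    (hgrowth : ∀ w : ℂ, R < ‖w‖ → g w ≤ K * ‖w‖ ^ N)
    (hineq : ∀ k : ℝ, 0 < k → ∃ b > (0 : ℝ), ∀ w : ℂ, R < ‖w‖ →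
      -(1 / 4) * (d2x g w + d2y g w) ≤
        b * ‖w‖ ^ (-k) + (-c + ‖w‖ ^ (-(2 : ℝ))) * g w) :
    ∀ k : ℝ, 0 < k → ∃ Rk ≥ R, ∃ Kk > (0 : ℝ), ∀ w : ℂ, Rk ≤ ‖w‖ →
      g w ≤ Kk * ‖w‖ ^ (-k) := by
  intro k hk
  obtain ⟨b, hb, hbineq⟩ := hineq k hk
  obtain ⟨R₁, hR₁⟩ := eventually_atTop.1 <| (eventually_gt_atTop R).and <|
    (eventually_gt_atTop 0).and <| (eventually_rpow_neg_two_mul_le _ hc).and <|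
    (eventually_rpow_neg_two_mul_le _ hc).and (eventually_rpow_neg_two_mul_le 4 hc)
  set M := max (2 * b / c) (K * R₁ ^ (N + k))
  have hM : 0 < M := lt_max_of_lt_left (by positivity)
  have hbM : b ≤ c * M / 2 := by
    have := (div_le_iff₀ hc).1 (le_max_left (2 * b / c) (K * R₁ ^ (N + k)))
    linarith
  refine ⟨R₁, (hR₁ R₁ le_rfl).1.le, M, hM, fun w hw => le_of_forall_pos_le_add fun ε hε => ?_⟩
  have hY : 0 < ‖w‖ ^ (N + 1) := Real.rpow_pos_of_pos (hR₁ _ hw).2.1 _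
  have := le_norm_rpow_barrier (hsm.of_le (by norm_cast)) hgrowth hbineq hR₁ hM.le
    hbM (le_max_right _ _) (div_pos hε hY) hw
  rwa [div_mul_cancel₀ _ hY.ne'] at this

/-- Variant of the Ahlfors-type estimate giving rapid decay (Lemma 17.10.25.50 of the paper).
Here `−∂_w ∂_w̄ g = −(1/4)(∂ₓ² + ∂_y²) g`. -/
theorem ahlfors_rapid_decay (R c N K : ℝ) (hR : 0 < R) (hc : 0 < c) (hN : 0 < N) (hK : 0 < K)
    (g : ℂ → ℝ)
    (hsm : ContDiffOn ℝ (⊤ : ℕ∞) g {w : ℂ | R < ‖w‖})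
    (hnonneg : ∀ w : ℂ, R < ‖w‖ → 0 ≤ g w)
    (hgrowth : ∀ w : ℂ, R < ‖w‖ → g w ≤ K * ‖w‖ ^ N)
    (hineq : ∀ k : ℝ, 0 < k → ∃ b > (0 : ℝ), ∀ w : ℂ, R < ‖w‖ →
      -(1 / 4) * (d2x g w + d2y g w) ≤
        b * ‖w‖ ^ (-k) + (-c + ‖w‖ ^ (-(2 : ℝ))) * g w) :
    ∀ k : ℝ, 0 < k → ∃ Rk ≥ R, ∃ Kk > (0 : ℝ), ∀ w : ℂ, Rk ≤ ‖w‖ →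
      g w ≤ Kk * ‖w‖ ^ (-k) :=
  ahlfors_rapid_decay_general R c N K hc g hsm hgrowth hineq
end
end

section
/- Let T > 0 and let f : ℝ × ℂ → ℝ be a bounded C² function with f ≥ 0, T-periodic in the first variable t, such that (∂_t² + ∂_x² + ∂_y²) f ≥ 0 at every point (i.e. Δf ≤ 0 for Δ = −(∂_t² + ∂_x² + ∂_y²)). Then f is constant. -/
/-!
Write `L = ∂_t² + ∂ₓ² + ∂_y²` and average `f²` over a period: `u w = ∫₀ᵀ f (t, w)² dt`.
Since `L (f²) = 2 f L f + 2 |∇f|² ≥ 2 |∇f|²` and the `∂_t²`-part integrates to zero over a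
period, `u` is a bounded function on `ℂ` with `Δu ≥ 2 ∫₀ᵀ |∇f|² ≥ 0`. A subharmonic function
on the plane that is bounded above is harmonic: if `Δu > 0` near `c`, the flux of `∇u` through
the circle of radius `r` about `c` is nondecreasing in `r` and eventually at least some `a > 0`,
so the mean of `u` over that circle grows like `a log r`. Hence `∇f = 0` and `f` is constant.
-/

open Set Filter Metric Complex Real intervalIntegral InnerProductSpace Laplacian Function
open MeasureTheory (volume)

noncomputable section

namespace PeriodicSubharmonic

def pt (F : ℝ × ℂ → ℝ) : ℝ × ℂ → ℝ := fun p => deriv (fun s : ℝ => F (s, p.2)) p.1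

def px (F : ℝ × ℂ → ℝ) : ℝ × ℂ → ℝ := fun p => deriv (fun s : ℝ => F (p.1, p.2 + s)) 0

def py (F : ℝ × ℂ → ℝ) : ℝ × ℂ → ℝ :=
  fun p => deriv (fun s : ℝ => F (p.1, p.2 + s * Complex.I)) 0

theorem tendsto_atTop_of_le_mul_deriv {A A' : ℝ → ℝ} {a δ : ℝ} (ha : 0 < a) (hδ : 0 < δ)
    (hA : ∀ r, HasDerivAt A (A' r) r) (h : ∀ r, δ ≤ r → a ≤ r * A' r) :
    Tendsto A atTop atTop := by
  have hmono : MonotoneOn (fun r => A r - a * Real.log r) (Ici δ) := by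
    have hd : ∀ r ∈ Ici δ, HasDerivAt (fun r => A r - a * Real.log r) (A' r - a * r⁻¹) r :=
      fun r hr => (hA r).sub ((hasDerivAt_log (hδ.trans_le hr).ne').const_mul a)
    refine monotoneOn_of_deriv_nonneg (convex_Ici δ)
      (fun r hr => (hd r hr).continuousAt.continuousWithinAt)
      (fun r hr => (hd r (interior_subset hr)).differentiableAt.differentiableWithinAt)
      (fun r hr => ?_)
    rw [interior_Ici, mem_Ioi] at hr
    have hr0 : 0 < r := hδ.trans hr
    rw [(hd r hr.le).deriv, sub_nonneg, ← div_eq_mul_inv, div_le_iff₀ hr0, mul_comm]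
    exact h r hr.le
  refine tendsto_atTop_mono' atTop ?_ ((tendsto_log_atTop.const_mul_atTop ha).atTop_add
    (tendsto_const_nhds (x := A δ - a * Real.log δ)))
  filter_upwards [eventually_ge_atTop δ] with r hr
  have := hmono self_mem_Ici hr hr
  simp only at this
  linarith

theorem eq_zero_of_integral_eq_zero {g : ℝ → ℝ} {a b : ℝ} (hab : a < b)
    (hg : ContinuousOn g (Icc a b)) (hg0 : ∀ t ∈ Icc a b, 0 ≤ g t) (h : ∫ t in a..b, g t = 0) :
    ∀ t ∈ Icc a b, g t = 0 := by
  refine fun t ht => (hg0 t ht).eq_of_not_lt' fun hpos => ?_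
  have := integral_lt_integral_of_continuousOn_of_le_of_exists_lt hab continuousOn_const hg
    (fun s hs => hg0 s (Ioc_subset_Icc_self hs)) ⟨t, ht, hpos⟩
  simp [h] at this

section ParametricIntegral

variable {H E : Type*} [NormedAddCommGroup H] [NormedSpace ℝ H] [ProperSpace H]
  [NormedAddCommGroup E] [NormedSpace ℝ E]

theorem hasFDerivAt_intervalIntegral_of_continuous {F : H → ℝ → E} {F' : H → ℝ → H →L[ℝ] E}
    (hF : Continuous (uncurry F)) (hF' : Continuous (uncurry F'))
    (hd : ∀ x t, HasFDerivAt (F · t) (F' x t) x) (a b : ℝ) (x₀ : H) :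
    HasFDerivAt (fun x => ∫ t in a..b, F x t) (∫ t in a..b, F' x₀ t) x₀ := by
  obtain ⟨C, hC⟩ := ((isCompact_closedBall x₀ 1).prod isCompact_uIcc).exists_bound_of_continuousOn
    hF'.continuousOn
  exact hasFDerivAt_integral_of_dominated_of_fderiv_le (bound := fun _ => C)
    (ball_mem_nhds x₀ one_pos)
    (.of_forall fun x => (hF.comp (.prodMk_right x)).aestronglyMeasurable)
    ((hF.comp (.prodMk_right x₀)).intervalIntegrable a b)
    (hF'.comp (.prodMk_right x₀)).aestronglyMeasurable
    (.of_forall fun t ht x hx => hC (x, t) ⟨ball_subset_closedBall hx, uIoc_subset_uIcc ht⟩)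
    intervalIntegrable_const (.of_forall fun t _ x _ => hd x t)

theorem hasDerivAt_intervalIntegral_of_continuous {F F' : ℝ → ℝ → E}
    (hF : Continuous (uncurry F)) (hF' : Continuous (uncurry F'))
    (hd : ∀ x t, HasDerivAt (F · t) (F' x t) x) (a b : ℝ) (x₀ : ℝ) :
    HasDerivAt (fun x => ∫ t in a..b, F x t) (∫ t in a..b, F' x₀ t) x₀ := by
  obtain ⟨C, hC⟩ := ((isCompact_closedBall x₀ 1).prod isCompact_uIcc).exists_bound_of_continuousOn
    hF'.continuousOn
  exact (hasDerivAt_integral_of_dominated_loc_of_deriv_le (bound := fun _ => C)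
    (ball_mem_nhds x₀ one_pos)
    (.of_forall fun x => (hF.comp (.prodMk_right x)).aestronglyMeasurable)
    ((hF.comp (.prodMk_right x₀)).intervalIntegrable a b)
    (hF'.comp (.prodMk_right x₀)).aestronglyMeasurable
    (.of_forall fun t ht x hx => hC (x, t) ⟨ball_subset_closedBall hx, uIoc_subset_uIcc ht⟩)
    intervalIntegrable_const (.of_forall fun t _ x _ => hd x t)).2

end ParametricIntegral

section SecondDerivative

variable {E F : Type*} [NormedAddCommGroup E] [NormedSpace ℝ E]
  [NormedAddCommGroup F] [NormedSpace ℝ F] {u : E → F}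

theorem _root_.ContDiff.hasFDerivAt_fderiv (hu : ContDiff ℝ 2 u) (x : E) :
    HasFDerivAt (fderiv ℝ u) (fderiv ℝ (fderiv ℝ u) x) x :=
  ((hu.fderiv_right (m := 1) le_rfl).differentiable one_ne_zero x).hasFDerivAt

theorem _root_.ContDiff.continuous_fderiv_fderiv (hu : ContDiff ℝ 2 u) :
    Continuous (fderiv ℝ (fderiv ℝ u)) :=
  (hu.fderiv_right (m := 1) le_rfl).continuous_fderiv one_ne_zero

theorem fderiv_fderiv_mul_self_apply {f : E → ℝ} (hf : ContDiff ℝ 2 f) (p v w : E) :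
    fderiv ℝ (fderiv ℝ fun x => f x * f x) p v w =
      2 * (f p * fderiv ℝ (fderiv ℝ f) p v w + fderiv ℝ f p v * fderiv ℝ f p w) := by
  have hd : ∀ x, HasFDerivAt f (fderiv ℝ f x) x :=
    fun x => (hf.differentiable two_ne_zero x).hasFDerivAt
  have h1 : fderiv ℝ (fun x => f x * f x) = fun x => (2 * f x) • fderiv ℝ f x :=
    funext fun x => by rw [((hd x).fun_mul (hd x)).fderiv, two_mul, add_smul]
  rw [h1, (((hd p).const_mul 2).fun_smul (hf.hasFDerivAt_fderiv p)).fderiv]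
  simp only [add_apply, smul_apply, ContinuousLinearMap.smulRight_apply, smul_eq_mul]
  ring

end SecondDerivative

section ComplexPlane

theorem apply_add_apply_mul_I (D : ℂ →L[ℝ] ℂ →L[ℝ] ℝ) (z : ℂ) :
    D z z + D (z * I) (z * I) = normSq z * (D 1 1 + D I I) := by
  obtain ⟨x, y⟩ := z
  have hz : (⟨x, y⟩ : ℂ) = x • (1 : ℂ) + y • I := by apply Complex.ext <;> simp
  have hzI : (⟨x, y⟩ : ℂ) * I = (-y) • (1 : ℂ) + x • I := by apply Complex.ext <;> simp
  rw [normSq_mk, hzI, hz]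
  simp only [map_add, map_smul, add_apply, smul_apply, smul_eq_mul]
  ring

theorem laplacian_eq_fderiv_fderiv {F : Type*} [NormedAddCommGroup F] [NormedSpace ℝ F]
    (u : ℂ → F) (w : ℂ) :
    Δ u w = fderiv ℝ (fderiv ℝ u) w 1 1 + fderiv ℝ (fderiv ℝ u) w I I := by
  simp [laplacian_eq_iteratedFDeriv_complexPlane, iteratedFDeriv_two_apply]

theorem continuous_laplacian {u : ℂ → ℝ} (hu : ContDiff ℝ 2 u) : Continuous (Δ u) := by
  have := hu.continuous_fderiv_fderiv
  rw [funext (laplacian_eq_fderiv_fderiv u)]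
  fun_prop

theorem hasDerivAt_circleMap_radius (c : ℂ) (r θ : ℝ) :
    HasDerivAt (circleMap c · θ) (circleMap 0 1 θ) r := by
  simpa [circleMap] using ((hasDerivAt_id r).ofReal_comp.mul_const (exp (θ * I))).const_add c

theorem continuous_uncurry_circleMap (c : ℂ) : Continuous (uncurry (circleMap c)) := by
  unfold circleMap uncurry; fun_prop

end ComplexPlane

section CircleIntegrals

variable {u : ℂ → ℝ} (c : ℂ) (r : ℝ)

theorem hasDerivAt_integral_circleMap (hu : ContDiff ℝ 1 u) :
    HasDerivAt (fun r => ∫ θ in 0..2 * π, u (circleMap c r θ))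
      (∫ θ in 0..2 * π, fderiv ℝ u (circleMap c r θ) (circleMap 0 1 θ)) r := by
  refine hasDerivAt_intervalIntegral_of_continuous
    (F' := fun r θ => fderiv ℝ u (circleMap c r θ) (circleMap 0 1 θ)) ?_ ?_ (fun r θ => ?_) _ _ r
  · exact hu.continuous.comp (continuous_uncurry_circleMap c)
  · exact ((hu.continuous_fderiv one_ne_zero).comp (continuous_uncurry_circleMap c)).clm_apply
      ((continuous_circleMap 0 1).comp continuous_snd)
  · exact (hu.differentiable one_ne_zero _).hasFDerivAt.comp_hasDerivAt r
      (hasDerivAt_circleMap_radius c r θ)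

theorem hasDerivAt_integral_fderiv_circleMap (hu : ContDiff ℝ 2 u) :
    HasDerivAt (fun r => ∫ θ in 0..2 * π, fderiv ℝ u (circleMap c r θ) (circleMap 0 1 θ))
      (∫ θ in 0..2 * π, fderiv ℝ (fderiv ℝ u) (circleMap c r θ) (circleMap 0 1 θ)
        (circleMap 0 1 θ)) r := by
  have he : Continuous fun p : ℝ × ℝ => circleMap 0 1 p.2 :=
    (continuous_circleMap 0 1).comp continuous_snd
  refine hasDerivAt_intervalIntegral_of_continuous (F' := fun r θ =>
    fderiv ℝ (fderiv ℝ u) (circleMap c r θ) (circleMap 0 1 θ) (circleMap 0 1 θ)) ?_ ?_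
    (fun r θ => ?_) _ _ r
  · exact ((hu.continuous_fderiv two_ne_zero).comp (continuous_uncurry_circleMap c)).clm_apply he
  · exact ((hu.continuous_fderiv_fderiv.comp (continuous_uncurry_circleMap c)).clm_apply
      he).clm_apply he
  · simpa using ((hu.hasFDerivAt_fderiv _).comp_hasDerivAt r
      (hasDerivAt_circleMap_radius c r θ)).clm_apply (hasDerivAt_const r (circleMap 0 1 θ))

theorem integral_fderiv_circleMap_eq (hu : ContDiff ℝ 2 u) :
    ∫ θ in 0..2 * π, fderiv ℝ u (circleMap c r θ) (circleMap 0 1 θ) =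
      r * ∫ θ in 0..2 * π, fderiv ℝ (fderiv ℝ u) (circleMap c r θ) (circleMap 0 1 θ * I)
        (circleMap 0 1 θ * I) := by
  set D2 := fderiv ℝ (fderiv ℝ u)
  -- integrate the `θ`-derivative of `Du (circleMap c r θ) (i e^{iθ})` over a period
  have hB : ∀ θ, HasDerivAt (fun θ => fderiv ℝ u (circleMap c r θ) (circleMap 0 1 θ * I))
      (r * D2 (circleMap c r θ) (circleMap 0 1 θ * I) (circleMap 0 1 θ * I)
        - fderiv ℝ u (circleMap c r θ) (circleMap 0 1 θ)) θ := by
    intro θ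
    refine (((hu.hasFDerivAt_fderiv _).comp_hasDerivAt θ (hasDerivAt_circleMap c r θ)).clm_apply
      ((hasDerivAt_circleMap 0 1 θ).mul_const I)).congr_deriv ?_
    have hr : circleMap 0 r θ * I = r • (circleMap 0 1 θ * I) := by
      simp only [circleMap_zero, ofReal_one, one_mul, real_smul]
      ring
    have hII : circleMap 0 1 θ * I * I = -circleMap 0 1 θ := by rw [mul_assoc, I_mul_I, mul_neg_one]
    rw [hr, hII, map_smul, map_neg]
    simp only [smul_apply, smul_eq_mul, comp_apply, D2]
    ring
  have hD1 : Continuous fun θ => fderiv ℝ u (circleMap c r θ) (circleMap 0 1 θ) :=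
    ((hu.continuous_fderiv two_ne_zero).comp (continuous_circleMap c r)).clm_apply
      (continuous_circleMap 0 1)
  have hD2 : Continuous fun θ => D2 (circleMap c r θ) (circleMap 0 1 θ * I) (circleMap 0 1 θ * I) :=
    have he := (continuous_circleMap 0 1).mul continuous_const
    ((hu.continuous_fderiv_fderiv.comp (continuous_circleMap c r)).clm_apply he).clm_apply he
  have hFTC := integral_eq_sub_of_hasDerivAt (a := 0) (b := 2 * π) (fun θ _ => hB θ)
    (((hD2.const_mul r).sub hD1).intervalIntegrable _ _)
  rw [(periodic_circleMap c r).eq, (periodic_circleMap 0 1).eq, sub_self,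
    integral_sub ((hD2.const_mul r).intervalIntegrable _ _) (hD1.intervalIntegrable _ _),
    integral_const_mul] at hFTC
  linarith

/-- By the divergence theorem this is `∫ Δu` over `ball c r`. -/
def circleFlux (u : ℂ → ℝ) (c : ℂ) (r : ℝ) : ℝ :=
  r * ∫ θ in 0..2 * π, fderiv ℝ u (circleMap c r θ) (circleMap 0 1 θ)

theorem hasDerivAt_circleFlux (hu : ContDiff ℝ 2 u) :
    HasDerivAt (circleFlux u c) (r * ∫ θ in 0..2 * π, Δ u (circleMap c r θ)) r := by
  set D2 := fderiv ℝ (fderiv ℝ u)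
  refine ((hasDerivAt_id r).mul (hasDerivAt_integral_fderiv_circleMap c r hu)).congr_deriv ?_
  have he := continuous_circleMap 0 1
  have hD2 : ∀ v : ℝ → ℂ, Continuous v →
      IntervalIntegrable (fun θ => D2 (circleMap c r θ) (v θ) (v θ)) volume 0 (2 * π) :=
    fun v hv => (((hu.continuous_fderiv_fderiv.comp (continuous_circleMap c r)).clm_apply
      hv).clm_apply hv).intervalIntegrable _ _
  have hΔ : ∀ θ, Δ u (circleMap c r θ) = D2 (circleMap c r θ) (circleMap 0 1 θ) (circleMap 0 1 θ)
      + D2 (circleMap c r θ) (circleMap 0 1 θ * I) (circleMap 0 1 θ * I) := fun θ => by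
    rw [apply_add_apply_mul_I, laplacian_eq_fderiv_fderiv]
    simp [circleMap_zero, normSq_eq_norm_sq, D2]
  rw [integral_fderiv_circleMap_eq c r hu, integral_congr fun θ _ => hΔ θ,
    integral_add (hD2 _ he) (hD2 (fun θ => circleMap 0 1 θ * I) (he.mul continuous_const))]
  simp only [id, one_mul]
  ring

theorem monotoneOn_circleFlux (hu : ContDiff ℝ 2 u) (hΔ : ∀ w, 0 ≤ Δ u w) :
    MonotoneOn (circleFlux u c) (Ici 0) := by
  have hflux := fun r => hasDerivAt_circleFlux c r hu
  refine monotoneOn_of_deriv_nonneg (convex_Ici 0) (HasDerivAt.continuousOn fun r _ => hflux r)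
    (fun r _ => (hflux r).differentiableAt.differentiableWithinAt) fun r hr => ?_
  rw [interior_Ici] at hr
  rw [(hflux r).deriv]
  exact mul_nonneg (le_of_lt hr) (integral_nonneg two_pi_pos.le fun θ _ => hΔ _)

variable {c} in
theorem circleFlux_pos (hu : ContDiff ℝ 2 u) {δ : ℝ} (hδ : 0 < δ)
    (hpos : ∀ w ∈ ball c δ, 0 < Δ u w) : 0 < circleFlux u c δ := by
  have hflux := fun r => hasDerivAt_circleFlux c r hu
  have hmono : StrictMonoOn (circleFlux u c) (Icc 0 δ) := by
    refine strictMonoOn_of_deriv_pos (convex_Icc 0 δ)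
      (HasDerivAt.continuousOn fun r _ => hflux r) fun r hr => ?_
    rw [interior_Icc] at hr
    rw [(hflux r).deriv]
    refine mul_pos hr.1 (intervalIntegral_pos_of_pos_on ?_ (fun θ _ => hpos _ ?_) two_pi_pos)
    · exact ((continuous_laplacian hu).comp (continuous_circleMap c r)).intervalIntegrable _ _
    · simp [circleMap, abs_of_pos hr.1, hr.2]
  simpa [circleFlux] using hmono (left_mem_Icc.2 hδ.le) (right_mem_Icc.2 hδ.le) hδ

end CircleIntegrals

theorem laplacian_eq_zero_of_bddAbove {u : ℂ → ℝ} (hu : ContDiff ℝ 2 u)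
    (hbdd : BddAbove (range u)) (hΔ : ∀ w, 0 ≤ Δ u w) (c : ℂ) : Δ u c = 0 := by
  by_contra hne
  obtain ⟨δ, hδ, hpos⟩ : ∃ δ > 0, ∀ w ∈ ball c δ, 0 < Δ u w :=
    Metric.isOpen_iff.1 (isOpen_lt continuous_const (continuous_laplacian hu)) c
      ((hΔ c).lt_of_ne' hne)
  have hgrowth := tendsto_atTop_of_le_mul_deriv (circleFlux_pos hu hδ hpos) hδ
    (fun r => hasDerivAt_integral_circleMap c r (hu.of_le one_le_two))
    fun r hr => monotoneOn_circleFlux c hu hΔ hδ.le (hδ.le.trans hr) hr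
  obtain ⟨B, hB⟩ := hbdd
  obtain ⟨r, hr⟩ := (hgrowth.eventually_gt_atTop (2 * π * B)).exists
  have : ∫ θ in 0..2 * π, u (circleMap c r θ) ≤ 2 * π * B := by
    simpa [mul_comm] using integral_mono_on two_pi_pos.le
      ((hu.continuous.comp (continuous_circleMap c r)).intervalIntegrable _ _)
      (intervalIntegrable_const (μ := volume)) fun θ _ => hB (mem_range_self (circleMap c r θ))
  linarith

section PeriodAverage

universe v

variable {H F : Type v} [NormedAddCommGroup H] [NormedSpace ℝ H] [ProperSpace H]
  [NormedAddCommGroup F] [NormedSpace ℝ F]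

theorem hasFDerivAt_intervalIntegral_prod {G : ℝ × H → F} (hG : ContDiff ℝ 1 G) (a b : ℝ)
    (w : H) :
    HasFDerivAt (fun w => ∫ t in a..b, G (t, w))
      (∫ t in a..b, fderiv ℝ G (t, w) ∘L .inr ℝ ℝ H) w := by
  have hswap : Continuous fun p : H × ℝ => (p.2, p.1) := continuous_snd.prodMk continuous_fst
  refine hasFDerivAt_intervalIntegral_of_continuous
    (F' := fun w t => fderiv ℝ G (t, w) ∘L .inr ℝ ℝ H) ?_ ?_ (fun w t => ?_) a b w
  · exact hG.continuous.comp hswap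
  · exact ((hG.continuous_fderiv one_ne_zero).comp hswap).clm_comp continuous_const
  · exact (hG.differentiable one_ne_zero _).hasFDerivAt.comp w (hasFDerivAt_prodMk_right t w)

-- `H` and `F` share a universe so that the induction can pass from `F` to `H →L[ℝ] F`.
theorem contDiff_intervalIntegral_prod {n : ℕ} {G : ℝ × H → F} (hG : ContDiff ℝ n G)
    (a b : ℝ) : ContDiff ℝ n fun w => ∫ t in a..b, G (t, w) := by
  induction n generalizing F with
  | zero =>
    exact contDiff_zero.2 (continuous_parametric_intervalIntegral_of_continuous'
      (f := fun w t => G (t, w)) (hG.continuous.comp (continuous_snd.prodMk continuous_fst)) a b)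
  | succ n ih =>
    rw [Nat.cast_succ] at hG ⊢
    exact contDiff_succ_iff_hasFDerivAt.2 ⟨_, ih ((hG.fderiv_right le_rfl).clm_comp contDiff_const),
      hasFDerivAt_intervalIntegral_prod (hG.of_le (by simp)) a b⟩

theorem fderiv_fderiv_intervalIntegral_prod_apply {q : ℝ × H → F} (hq : ContDiff ℝ 2 q)
    (a b : ℝ) (w v v' : H) :
    fderiv ℝ (fderiv ℝ fun w => ∫ t in a..b, q (t, w)) w v v' =
      ∫ t in a..b, fderiv ℝ (fderiv ℝ q) (t, w) (0, v) (0, v') := by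
  have hG : ContDiff ℝ 1 fun p => fderiv ℝ q p ∘L .inr ℝ ℝ H :=
    (hq.fderiv_right le_rfl).clm_comp contDiff_const
  have hG' : ∀ p x y, fderiv ℝ (fun p => fderiv ℝ q p ∘L .inr ℝ ℝ H) p x y =
      fderiv ℝ (fderiv ℝ q) p x (0, y) := fun p x y => by
    rw [((hq.hasFDerivAt_fderiv p).clm_comp (hasFDerivAt_const _ p)).fderiv]
    simp only [ContinuousLinearMap.coe_comp, Function.comp_apply, ContinuousLinearMap.compL_apply,
      ContinuousLinearMap.flip_apply, ContinuousLinearMap.comp_zero, ContinuousLinearMap.inr_apply,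
      zero_add]
  have hc : Continuous fun t =>
      fderiv ℝ (fun p => fderiv ℝ q p ∘L .inr ℝ ℝ H) (t, w) ∘L .inr ℝ ℝ H :=
    ((hG.continuous_fderiv one_ne_zero).comp (continuous_id.prodMk continuous_const)).clm_comp
      continuous_const
  rw [funext fun w => (hasFDerivAt_intervalIntegral_prod (hq.of_le one_le_two) a b w).fderiv,
    (hasFDerivAt_intervalIntegral_prod hG a b w).fderiv,
    ContinuousLinearMap.intervalIntegral_apply (hc.intervalIntegrable _ _),
    ContinuousLinearMap.intervalIntegral_apply
      ((hc.clm_apply continuous_const).intervalIntegrable _ _)]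
  simp only [ContinuousLinearMap.coe_comp, Function.comp_apply, ContinuousLinearMap.inr_apply, hG']

theorem bddAbove_range_intervalIntegral {X : Type*} [TopologicalSpace X] {G : ℝ × X → ℝ}
    {a b B : ℝ} (hab : a ≤ b) (hG : Continuous G) (hB : ∀ p, G p ≤ B) :
    BddAbove (range fun w => ∫ t in a..b, G (t, w)) := by
  refine ⟨(b - a) * B, ?_⟩
  rintro _ ⟨w, rfl⟩
  simpa using integral_mono_on hab
    ((hG.comp (continuous_id.prodMk continuous_const)).intervalIntegrable _ _)
    (intervalIntegrable_const (μ := volume)) fun t _ => hB (t, w)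

end PeriodAverage

section Periodic

variable {H F : Type*} [NormedAddCommGroup H] [NormedSpace ℝ H]
  [NormedAddCommGroup F] [NormedSpace ℝ F] {q : ℝ × H → F} {T : ℝ}

theorem fderiv_add_period (hq : ∀ t w, q (t + T, w) = q (t, w)) (t : ℝ) (w : H) :
    fderiv ℝ q (t + T, w) = fderiv ℝ q (t, w) := by
  have hshift : (fun p => q (p + (T, 0))) = q := funext fun ⟨t, w⟩ => by simpa using hq t w
  conv_rhs => rw [← hshift, fderiv_comp_add_right]
  simp

theorem integral_fderiv_fderiv_apply_eq_zero [CompleteSpace F] (hq : ContDiff ℝ 2 q)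
    (hper : ∀ t w, q (t + T, w) = q (t, w)) (w : H) :
    ∫ t in 0..T, fderiv ℝ (fderiv ℝ q) (t, w) (1, 0) (1, 0) = 0 := by
  have hd : ∀ t, HasDerivAt (fun t => fderiv ℝ q (t, w) (1, 0))
      (fderiv ℝ (fderiv ℝ q) (t, w) (1, 0) (1, 0)) t := fun t => by
    simpa using ((hq.hasFDerivAt_fderiv _).comp_hasDerivAt t
      ((hasDerivAt_id t).prodMk (hasDerivAt_const t w))).clm_apply
      (hasDerivAt_const t ((1, 0) : ℝ × H))
  have hc : Continuous fun t => fderiv ℝ (fderiv ℝ q) (t, w) (1, 0) (1, 0) :=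
    ((hq.continuous_fderiv_fderiv.comp (continuous_id.prodMk continuous_const)).clm_apply
      continuous_const).clm_apply continuous_const
  have hT := fderiv_add_period hper 0 w
  rw [zero_add] at hT
  rw [integral_eq_sub_of_hasDerivAt (fun t _ => hd t) (hc.intervalIntegrable _ _), hT, sub_self]

end Periodic

section Cylinder

variable {F : ℝ × ℂ → ℝ} {F' : ℝ × ℂ →L[ℝ] ℝ} {p : ℝ × ℂ}

theorem pt_eq_of_hasFDerivAt (h : HasFDerivAt F F' p) : pt F p = F' (1, 0) :=
  (h.comp_hasDerivAt p.1 ((hasDerivAt_id _).prodMk (hasDerivAt_const _ _))).deriv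

theorem px_eq_of_hasFDerivAt (h : HasFDerivAt F F' p) : px F p = F' (0, 1) := by
  have hc : HasDerivAt (fun s : ℝ => (p.1, p.2 + s)) ((0 : ℝ), (1 : ℂ)) 0 :=
    (hasDerivAt_const _ _).prodMk
      (by simpa using (hasDerivAt_id (0 : ℝ)).ofReal_comp.const_add p.2)
  exact (h.comp_hasDerivAt_of_eq 0 hc (by simp)).deriv

theorem py_eq_of_hasFDerivAt (h : HasFDerivAt F F' p) : py F p = F' (0, I) := by
  have hc : HasDerivAt (fun s : ℝ => (p.1, p.2 + s * I)) ((0 : ℝ), I) 0 :=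
    (hasDerivAt_const _ _).prodMk
      (by simpa using ((hasDerivAt_id (0 : ℝ)).ofReal_comp.mul_const I).const_add p.2)
  exact (h.comp_hasDerivAt_of_eq 0 hc (by simp)).deriv

/-- Mathlib's sign convention: the paper's `Δ` is `-cylLaplacian`. -/
def cylLaplacian (F : ℝ × ℂ → ℝ) (p : ℝ × ℂ) : ℝ := pt (pt F) p + px (px F) p + py (py F) p

def gradNormSq (F : ℝ × ℂ → ℝ) (p : ℝ × ℂ) : ℝ :=
  fderiv ℝ F p (1, 0) ^ 2 + fderiv ℝ F p (0, 1) ^ 2 + fderiv ℝ F p (0, I) ^ 2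

theorem cylLaplacian_eq_fderiv_fderiv (hF : ContDiff ℝ 2 F) (p : ℝ × ℂ) :
    cylLaplacian F p = fderiv ℝ (fderiv ℝ F) p (1, 0) (1, 0)
      + fderiv ℝ (fderiv ℝ F) p (0, 1) (0, 1) + fderiv ℝ (fderiv ℝ F) p (0, I) (0, I) := by
  have h1 : ∀ q, HasFDerivAt F (fderiv ℝ F q) q :=
    fun q => (hF.differentiable two_ne_zero q).hasFDerivAt
  have h2 : ∀ v, HasFDerivAt (fun q => fderiv ℝ F q v) ((fderiv ℝ (fderiv ℝ F) p).flip v) p :=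
    fun v => by simpa using (hF.hasFDerivAt_fderiv p).clm_apply (hasFDerivAt_const v p)
  have ht : pt F = fun q => fderiv ℝ F q (1, 0) := funext fun q => pt_eq_of_hasFDerivAt (h1 q)
  have hx : px F = fun q => fderiv ℝ F q (0, 1) := funext fun q => px_eq_of_hasFDerivAt (h1 q)
  have hy : py F = fun q => fderiv ℝ F q (0, I) := funext fun q => py_eq_of_hasFDerivAt (h1 q)
  rw [cylLaplacian, ht, hx, hy, pt_eq_of_hasFDerivAt (h2 _), px_eq_of_hasFDerivAt (h2 _),
    py_eq_of_hasFDerivAt (h2 _)]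
  rfl

theorem continuous_cylLaplacian (hF : ContDiff ℝ 2 F) : Continuous (cylLaplacian F) := by
  have := hF.continuous_fderiv_fderiv
  rw [funext (cylLaplacian_eq_fderiv_fderiv hF)]
  fun_prop

theorem continuous_gradNormSq (hF : ContDiff ℝ 1 F) : Continuous (gradNormSq F) := by
  have := hF.continuous_fderiv one_ne_zero
  unfold gradNormSq
  fun_prop

theorem cylLaplacian_mul_self (hF : ContDiff ℝ 2 F) (p : ℝ × ℂ) :
    cylLaplacian (fun q => F q * F q) p = 2 * F p * cylLaplacian F p + 2 * gradNormSq F p := by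
  rw [cylLaplacian_eq_fderiv_fderiv (hF.mul hF), cylLaplacian_eq_fderiv_fderiv hF, gradNormSq]
  simp only [fderiv_fderiv_mul_self_apply hF]
  ring

theorem fderiv_eq_zero_of_gradNormSq_eq_zero (h : gradNormSq F p = 0) : fderiv ℝ F p = 0 := by
  set D := fderiv ℝ F p
  have h' : D (1, 0) ^ 2 + D (0, 1) ^ 2 + D (0, I) ^ 2 = 0 := h
  have ht : D (1, 0) = 0 := pow_eq_zero_iff two_ne_zero |>.1 <| by
    linarith [sq_nonneg (D (1, 0)), sq_nonneg (D (0, 1)), sq_nonneg (D (0, I))]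
  have hx : D (0, 1) = 0 := pow_eq_zero_iff two_ne_zero |>.1 <| by
    linarith [sq_nonneg (D (1, 0)), sq_nonneg (D (0, 1)), sq_nonneg (D (0, I))]
  have hy : D (0, I) = 0 := pow_eq_zero_iff two_ne_zero |>.1 <| by
    linarith [sq_nonneg (D (1, 0)), sq_nonneg (D (0, 1)), sq_nonneg (D (0, I))]
  refine ContinuousLinearMap.ext fun v => ?_
  have hv : v = v.1 • ((1 : ℝ), (0 : ℂ)) + v.2.re • ((0 : ℝ), (1 : ℂ)) + v.2.im • ((0 : ℝ), I) := by
    ext <;> simp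
  rw [hv, map_add, map_add, map_smul, map_smul, map_smul, ht, hx, hy]
  simp

theorem laplacian_intervalIntegral_eq {q : ℝ × ℂ → ℝ} {T : ℝ} (hq : ContDiff ℝ 2 q)
    (hper : ∀ t w, q (t + T, w) = q (t, w)) (w : ℂ) :
    Δ (fun w => ∫ t in 0..T, q (t, w)) w = ∫ t in 0..T, cylLaplacian q (t, w) := by
  have hi : ∀ v : ℝ × ℂ,
      IntervalIntegrable (fun t => fderiv ℝ (fderiv ℝ q) (t, w) v v) volume 0 T :=
    fun v => (((hq.continuous_fderiv_fderiv.comp (continuous_id.prodMk continuous_const)).clm_apply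
      continuous_const).clm_apply continuous_const).intervalIntegrable _ _
  simp_rw [laplacian_eq_fderiv_fderiv, fderiv_fderiv_intervalIntegral_prod_apply hq,
    cylLaplacian_eq_fderiv_fderiv hq]
  rw [integral_add ((hi _).add (hi _)) (hi _), integral_add (hi _) (hi _),
    integral_fderiv_fderiv_apply_eq_zero hq hper, zero_add]

theorem two_mul_integral_gradNormSq_le_laplacian {f : ℝ × ℂ → ℝ} {T : ℝ} (hT : 0 ≤ T)
    (hf : ContDiff ℝ 2 f) (hf_nonneg : ∀ p, 0 ≤ f p) (hper : ∀ t w, f (t + T, w) = f (t, w))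
    (hsub : ∀ p, 0 ≤ cylLaplacian f p) (w : ℂ) :
    2 * ∫ t in 0..T, gradNormSq f (t, w) ≤ Δ (fun w => ∫ t in 0..T, f (t, w) * f (t, w)) w := by
  have hline : Continuous fun t : ℝ => (t, w) := continuous_id.prodMk continuous_const
  rw [laplacian_intervalIntegral_eq (hf.mul hf) (fun t w => by rw [hper]) w,
    ← integral_const_mul]
  refine integral_mono_on hT
    ((((continuous_gradNormSq (hf.of_le one_le_two)).comp hline).const_mul 2).intervalIntegrable
      _ _)
    (((continuous_cylLaplacian (hf.mul hf)).comp hline).intervalIntegrable _ _) fun t _ => ?_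
  rw [cylLaplacian_mul_self hf]
  nlinarith [mul_nonneg (hf_nonneg (t, w)) (hsub (t, w))]

end Cylinder

/-- A bounded nonnegative subharmonic function on `S¹_T × ℂ` is constant
(the lemma of §7.1.4 of the paper).  Here `Δ = −(∂_t² + ∂ₓ² + ∂_y²)`, and the subharmonicity
`Δ f ≤ 0` is taken pointwise for the `C²` function `f`. -/
theorem bounded_nonneg_subharmonic_constant (T : ℝ) (hT : 0 < T) (f : ℝ × ℂ → ℝ)
    (hf_sm : ContDiff ℝ 2 f)
    (hf_bdd : ∃ M : ℝ, ∀ p : ℝ × ℂ, |f p| ≤ M)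
    (hf_nonneg : ∀ p : ℝ × ℂ, 0 ≤ f p)
    (hf_per : ∀ t : ℝ, ∀ w : ℂ, f (t + T, w) = f (t, w))
    (hf_sub : ∀ p : ℝ × ℂ, 0 ≤ pt (pt f) p + px (px f) p + py (py f) p) :
    ∀ p q : ℝ × ℂ, f p = f q := by
  obtain ⟨M, hM⟩ := hf_bdd
  have hline : ∀ w : ℂ, Continuous fun t : ℝ => (t, w) :=
    fun w => continuous_id.prodMk continuous_const
  have hgrad : ∀ p, 0 ≤ gradNormSq f p := fun p => by unfold gradNormSq; positivity
  have hgrad_int : ∀ w, 0 ≤ ∫ t in 0..T, gradNormSq f (t, w) :=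
    fun w => integral_nonneg hT.le fun t _ => hgrad _
  have hΔ := two_mul_integral_gradNormSq_le_laplacian hT.le hf_sm hf_nonneg hf_per hf_sub
  have hharmonic := laplacian_eq_zero_of_bddAbove
    (contDiff_intervalIntegral_prod (hf_sm.mul hf_sm) 0 T)
    (bddAbove_range_intervalIntegral hT.le (hf_sm.continuous.mul hf_sm.continuous)
      fun p => mul_self_le_mul_self (hf_nonneg p) ((le_abs_self _).trans (hM p)))
    fun w => by linarith [hΔ w, hgrad_int w]
  have hgrad_zero : ∀ w, ∀ t ∈ Icc 0 T, gradNormSq f (t, w) = 0 := fun w =>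
    eq_zero_of_integral_eq_zero hT
      ((continuous_gradNormSq (hf_sm.of_le one_le_two)).comp (hline w)).continuousOn
      (fun t _ => hgrad _) (by linarith [hΔ w, hharmonic w, hgrad_int w])
  have hfderiv : ∀ p, fderiv ℝ f p = 0 := fun ⟨t, w⟩ => by
    obtain ⟨t', ht', heq⟩ := (show Periodic (fun t => fderiv ℝ f (t, w)) T from
      fun t => fderiv_add_period hf_per t w).exists_mem_Ico₀ hT t
    exact heq ▸ fderiv_eq_zero_of_gradNormSq_eq_zero (hgrad_zero w t' (Ico_subset_Icc_self ht'))
  exact is_const_of_fderiv_eq_zero (hf_sm.differentiable two_ne_zero) hfderiv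

end PeriodicSubharmonic
end
end

section
/- Let (V, Φ) be a torsion-free difference module of finite type, and set d := dim_{ℂ(X)} (ℂ(X) ⊗_{ℂ[X]} V). Then there exists a ℂ[X]-submodule W ⊆ V which is free of rank d such that: (a) the ℂ[X]-submodule of V generated by ⋃_{n∈ℤ} Φⁿ(W) equals V; and (b) the image of ℂ(X) ⊗_{ℂ[X]} W → ℂ(X) ⊗_{ℂ[X]} V spans, i.e. the natural map is surjective. -/
open Polynomial TensorProduct

/-!
Over the PID `ℂ[X]` a finitely generated torsion-free module is free. Take for `W` the span of the
finite set `S` generating `V` as a difference module together with finitely many vectors whose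
images span `ℂ(X) ⊗ V`. Then the iterates of `W` contain those of `S`, and `ℂ(X) ⊗ W → ℂ(X) ⊗ V` is
surjective by construction and injective because `ℂ(X)` is flat over `ℂ[X]`; hence the rank of `W`
is `dim_{ℂ(X)} (ℂ(X) ⊗ V)`.
-/

namespace Submodule

variable {R A M : Type*} [CommRing R] [CommRing A] [Algebra R A] [AddCommGroup M] [Module R M]

theorem exists_finset_baseChange_span_eq_top [Module.Finite A (A ⊗[R] M)] :
    ∃ t : Finset M, (span R (t : Set M)).baseChange A = ⊤ := by
  classical
  have hspan : span A (TensorProduct.mk R A M 1 '' Set.univ) = ⊤ := by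
    rw [← baseChange_span, span_univ, baseChange_top]
  obtain ⟨u, hu, hu_span⟩ :=
    (fg_span_iff_fg_span_finset_subset _).1 (hspan ▸ Module.Finite.fg_top)
  obtain ⟨t, -, rfl⟩ := Finset.subset_set_image_iff.1 hu
  exact ⟨t, by rw [baseChange_span, ← Finset.coe_image, ← hu_span, hspan]⟩

theorem surjective_lTensor_subtype_of_baseChange_eq_top {W : Submodule R M}
    (h : W.baseChange A = ⊤) : Function.Surjective (W.subtype.lTensor A) := by
  rw [← LinearMap.baseChange_eq_ltensor]
  exact LinearMap.range_eq_top.1 h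

theorem finrank_eq_finrank_tensorProduct_of_baseChange_eq_top [Module.Flat R A]
    [StrongRankCondition R] [StrongRankCondition A] {W : Submodule R M} [Module.Free R W]
    (h : W.baseChange A = ⊤) :
    Module.finrank R W = Module.finrank A (A ⊗[R] M) := by
  have hinj : Function.Injective (W.subtype.baseChange A) :=
    Module.Flat.lTensor_preserves_injective_linearMap _ W.injective_subtype
  let e : (A ⊗[R] W) ≃ₗ[A] (A ⊗[R] M) :=
    .ofBijective _ ⟨hinj, surjective_lTensor_subtype_of_baseChange_eq_top h⟩
  rw [← Module.finrank_baseChange (R := A), e.finrank_eq]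

end Submodule

open Submodule in
theorem difference_module_free_lattice_general (V : Type*) [AddCommGroup V]
    [Module (Polynomial ℂ) V] (Φ : AddAut V)
    (htf : ∀ (q : Polynomial ℂ) (v : V), q • v = 0 → q = 0 ∨ v = 0)
    (hfg : ∃ S : Finset V,
      Submodule.span (Polynomial ℂ) (⋃ n : ℤ, ⇑(n • Φ) '' (S : Set V)) = ⊤)
    (hfd : FiniteDimensional (RatFunc ℂ) (RatFunc ℂ ⊗[Polynomial ℂ] V)) :
    ∃ W : Submodule (Polynomial ℂ) V,
      Nonempty (Module.Basis (Fin (Module.finrank (RatFunc ℂ) (RatFunc ℂ ⊗[Polynomial ℂ] V)))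
        (Polynomial ℂ) W) ∧
      Submodule.span (Polynomial ℂ) (⋃ n : ℤ, ⇑(n • Φ) '' (W : Set V)) = ⊤ ∧
      Function.Surjective (LinearMap.lTensor (RatFunc ℂ) W.subtype) := by
  obtain ⟨S, hS⟩ := hfg
  obtain ⟨T, hT⟩ := exists_finset_baseChange_span_eq_top (R := ℂ[X]) (A := RatFunc ℂ) (M := V)
  let W := span ℂ[X] ((S : Set V) ∪ T)
  have hW : W.baseChange (RatFunc ℂ) = ⊤ :=
    eq_top_mono (baseChange_mono _ (span_mono (by simp))) hT
  have : Module.IsTorsionFree ℂ[X] V := .of_smul_eq_zero htf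
  have : Module.Finite ℂ[X] W := .span_of_finite _ (S.finite_toSet.union T.finite_toSet)
  have : Module.Flat ℂ[X] (RatFunc ℂ) := IsLocalization.flat _ (nonZeroDivisors ℂ[X])
  refine ⟨W, ⟨Module.finBasisOfFinrankEq ℂ[X] W
    (finrank_eq_finrank_tensorProduct_of_baseChange_eq_top hW)⟩, ?_,
    surjective_lTensor_subtype_of_baseChange_eq_top hW⟩
  refine eq_top_mono (span_mono (Set.iUnion_mono fun n ↦ Set.image_mono ?_)) hS
  exact subset_span.trans' (by simp)

/-- Existence of a free lattice in a torsion-free difference module of finite type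
(Lemma 17.11.18.1 of the paper).

Here `σ : ℂ[X] → ℂ[X]` is the automorphism `q ↦ q(X + c)` (in the paper `c = 2√−1 λ T`), and a
difference module is a `ℂ[X]`-module `V` with an additive bijection `Φ` satisfying
`Φ(q • v) = σ(q) • Φ(v)`.  `V` is torsion-free and of finite type: it is generated over the
difference algebra by a finite set, and `ℂ(X) ⊗_{ℂ[X]} V` is finite-dimensional over `ℂ(X)`.
The conclusion produces a `ℂ[X]`-free submodule `W` of rank
`d = dim_{ℂ(X)} (ℂ(X) ⊗ V)` such that the iterates `Φⁿ(W)` generate `V` over `ℂ[X]` and the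
natural map `ℂ(X) ⊗ W → ℂ(X) ⊗ V` is surjective. -/
theorem difference_module_free_lattice (c : ℂ) (V : Type*) [AddCommGroup V]
    [Module (Polynomial ℂ) V] (Φ : AddAut V)
    (hΦ : ∀ (q : Polynomial ℂ) (v : V),
      Φ (q • v) = (q.comp (Polynomial.X + Polynomial.C c)) • Φ v)
    (htf : ∀ (q : Polynomial ℂ) (v : V), q • v = 0 → q = 0 ∨ v = 0)
    (hfg : ∃ S : Finset V,
      Submodule.span (Polynomial ℂ) (⋃ n : ℤ, ⇑(n • Φ) '' (S : Set V)) = ⊤)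
    (hfd : FiniteDimensional (RatFunc ℂ) (RatFunc ℂ ⊗[Polynomial ℂ] V)) :
    ∃ W : Submodule (Polynomial ℂ) V,
      Nonempty (Module.Basis (Fin (Module.finrank (RatFunc ℂ) (RatFunc ℂ ⊗[Polynomial ℂ] V)))
        (Polynomial ℂ) W) ∧
      Submodule.span (Polynomial ℂ) (⋃ n : ℤ, ⇑(n • Φ) '' (W : Set V)) = ⊤ ∧
      Function.Surjective (LinearMap.lTensor (RatFunc ℂ) W.subtype) :=
  difference_module_free_lattice_general V Φ htf hfg hfd
end

section
/- Let A_t, A_x, A_y, φ : ℝ³ → M_r(ℂ) be C^∞ maps (coordinates (t,x,y) on ℝ³) satisfying the Bogomolny equations F_{xy} = ∇_t φ, F_{yt} = ∇_x φ, F_{tx} = ∇_y φ. Then for every cyclic permutation (a,b,c) of (t,x,y): (∇_x∇_x + ∇_y∇_y + ∇_t∇_t)(∇_a φ) = 4·[∇_b φ, ∇_c φ] − [φ, [φ, ∇_a φ]]. -/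
open scoped Matrix Matrix.Norms.L2Operator

noncomputable section

namespace Bogomolny

/-- Partial derivatives `∂_t, ∂ₓ, ∂_y` (indexed by `0, 1, 2`) of a matrix-valued function on
`ℝ³ = ℝ × ℝ × ℝ` with coordinates `(t, x, y)`. -/
def pd {r : ℕ} : Fin 3 → ((ℝ × ℝ × ℝ) → Matrix (Fin r) (Fin r) ℂ) →
    (ℝ × ℝ × ℝ) → Matrix (Fin r) (Fin r) ℂ :=
  ![fun F q => deriv (fun s : ℝ => F (s, q.2.1, q.2.2)) q.1,
    fun F q => deriv (fun s : ℝ => F (q.1, s, q.2.2)) q.2.1,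
    fun F q => deriv (fun s : ℝ => F (q.1, q.2.1, s)) q.2.2]

/-- The covariant derivative `∇_κ s = ∂_κ s + [A_κ, s]` on matrix-valued functions, for the
connection with coefficients `A`. -/
def cd {r : ℕ} (A : Fin 3 → (ℝ × ℝ × ℝ) → Matrix (Fin r) (Fin r) ℂ) (i : Fin 3)
    (F : (ℝ × ℝ × ℝ) → Matrix (Fin r) (Fin r) ℂ) : (ℝ × ℝ × ℝ) → Matrix (Fin r) (Fin r) ℂ :=
  fun q => pd i F q + (A i q * F q - F q * A i q)

/-- The curvature `F_{κλ} = ∂_κ A_λ − ∂_λ A_κ + [A_κ, A_λ]`. -/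
def curv {r : ℕ} (A : Fin 3 → (ℝ × ℝ × ℝ) → Matrix (Fin r) (Fin r) ℂ) (i j : Fin 3) :
    (ℝ × ℝ × ℝ) → Matrix (Fin r) (Fin r) ℂ :=
  fun q => pd i (A j) q - pd j (A i) q + (A i q * A j q - A j q * A i q)

/-!
The second Bianchi identity `∇_a F_{bc} + ∇_b F_{ca} + ∇_c F_{ab} = 0` together with the
Bogomolny equations says that the Higgs field is covariantly harmonic: `∑ᵢ ∇ᵢ∇ᵢ φ = 0`.
Applying `∇_a` and moving it through each `∇ᵢ∇ᵢ` by the Ricci identity `[∇ᵢ, ∇ⱼ] = ad F_{ij}`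
produces the terms `2 [F_{ia}, ∇ᵢ φ]` and `[∇ᵢ F_{ia}, φ]`. The Bogomolny equations turn the
first ones into `4 [∇_b φ, ∇_c φ]` and, after one more use of the Ricci identity, the second
ones into `-[φ, [φ, ∇_a φ]]`.
-/

open scoped ContDiff

section

variable {r : ℕ}

section Partial

def coordVec : Fin 3 → ℝ × ℝ × ℝ := ![(1, 0, 0), (0, 1, 0), (0, 0, 1)]

def coord : Fin 3 → ℝ × ℝ × ℝ → ℝ := ![fun q => q.1, fun q => q.2.1, fun q => q.2.2]

def coordLine : Fin 3 → ℝ × ℝ × ℝ → ℝ → ℝ × ℝ × ℝ :=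
  ![fun q s => (s, q.2.1, q.2.2), fun q s => (q.1, s, q.2.2), fun q s => (q.1, q.2.1, s)]

lemma pd_eq_deriv_comp_coordLine (i : Fin 3) (F : (ℝ × ℝ × ℝ) → Matrix (Fin r) (Fin r) ℂ)
    (q : ℝ × ℝ × ℝ) : pd i F q = deriv (F ∘ coordLine i q) (coord i q) := by
  fin_cases i <;> rfl

lemma coordLine_coord (i : Fin 3) (q : ℝ × ℝ × ℝ) : coordLine i q (coord i q) = q := by
  fin_cases i <;> rfl

lemma hasDerivAt_coordLine (i : Fin 3) (q : ℝ × ℝ × ℝ) :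
    HasDerivAt (coordLine i q) (coordVec i) (coord i q) := by
  fin_cases i
  · exact (hasDerivAt_id _).prodMk (hasDerivAt_const _ _)
  · exact (hasDerivAt_const _ _).prodMk ((hasDerivAt_id _).prodMk (hasDerivAt_const _ _))
  · exact (hasDerivAt_const _ _).prodMk ((hasDerivAt_const _ _).prodMk (hasDerivAt_id _))

variable {F G : (ℝ × ℝ × ℝ) → Matrix (Fin r) (Fin r) ℂ} {q : ℝ × ℝ × ℝ}

lemma hasDerivAt_comp_coordLine (hF : DifferentiableAt ℝ F q) (i : Fin 3) :
    HasDerivAt (F ∘ coordLine i q) (fderiv ℝ F q (coordVec i)) (coord i q) := by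
  have hF' : HasFDerivAt F (fderiv ℝ F q) (coordLine i q (coord i q)) := by
    rw [coordLine_coord]
    exact hF.hasFDerivAt
  exact hF'.comp_hasDerivAt _ (hasDerivAt_coordLine i q)

lemma pd_apply_eq_fderiv (hF : DifferentiableAt ℝ F q) (i : Fin 3) :
    pd i F q = fderiv ℝ F q (coordVec i) := by
  rw [pd_eq_deriv_comp_coordLine]
  exact (hasDerivAt_comp_coordLine hF i).deriv

lemma hasDerivAt_pd (hF : DifferentiableAt ℝ F q) (i : Fin 3) :
    HasDerivAt (F ∘ coordLine i q) (pd i F q) (coord i q) := by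
  rw [pd_apply_eq_fderiv hF]
  exact hasDerivAt_comp_coordLine hF i

lemma pd_eq_fderiv (hF : Differentiable ℝ F) (i : Fin 3) :
    pd i F = fun q => fderiv ℝ F q (coordVec i) :=
  funext fun q => pd_apply_eq_fderiv (hF q) i

lemma pd_zero (i : Fin 3) : pd i (0 : (ℝ × ℝ × ℝ) → Matrix (Fin r) (Fin r) ℂ) = 0 := by
  funext q
  rw [pd_eq_deriv_comp_coordLine]
  exact deriv_const _ _

lemma pd_add (hF : Differentiable ℝ F) (hG : Differentiable ℝ G) (i : Fin 3) :
    pd i (F + G) = pd i F + pd i G := by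
  funext q
  rw [pd_eq_deriv_comp_coordLine]
  exact ((hasDerivAt_pd (hF q) i).add (hasDerivAt_pd (hG q) i)).deriv

lemma pd_neg (hF : Differentiable ℝ F) (i : Fin 3) : pd i (-F) = -pd i F := by
  funext q
  rw [pd_eq_deriv_comp_coordLine]
  exact (hasDerivAt_pd (hF q) i).neg.deriv

lemma pd_sub (hF : Differentiable ℝ F) (hG : Differentiable ℝ G) (i : Fin 3) :
    pd i (F - G) = pd i F - pd i G := by
  funext q
  rw [pd_eq_deriv_comp_coordLine]
  exact ((hasDerivAt_pd (hF q) i).sub (hasDerivAt_pd (hG q) i)).deriv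

lemma pd_mul (hF : Differentiable ℝ F) (hG : Differentiable ℝ G) (i : Fin 3) :
    pd i (F * G) = pd i F * G + F * pd i G := by
  funext q
  have h := ((hasDerivAt_pd (hF q) i).mul (hasDerivAt_pd (hG q) i)).deriv
  rw [Function.comp_apply, Function.comp_apply, coordLine_coord] at h
  rw [pd_eq_deriv_comp_coordLine]
  exact h

lemma pd_lie (hF : Differentiable ℝ F) (hG : Differentiable ℝ G) (i : Fin 3) :
    pd i ⁅F, G⁆ = ⁅pd i F, G⁆ + ⁅F, pd i G⁆ := by
  rw [Ring.lie_def, pd_sub (hF.mul hG) (hG.mul hF), pd_mul hF hG, pd_mul hG hF]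
  noncomm_ring [Ring.lie_def]

lemma contDiff_pd (hF : ContDiff ℝ ∞ F) (i : Fin 3) : ContDiff ℝ ∞ (pd i F) := by
  rw [pd_eq_fderiv (hF.differentiable (by simp))]
  exact (hF.fderiv_right (by exact_mod_cast le_top)).clm_apply contDiff_const

lemma pd_pd_eq_fderiv_fderiv (hF : ContDiff ℝ ∞ F) (i j : Fin 3) (q : ℝ × ℝ × ℝ) :
    pd i (pd j F) q = fderiv ℝ (fderiv ℝ F) q (coordVec i) (coordVec j) := by
  have hF' : Differentiable ℝ (fderiv ℝ F) :=
    (hF.fderiv_right (m := ∞) (by exact_mod_cast le_top)).differentiable (by simp)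
  rw [pd_eq_fderiv (hF.differentiable (by simp)) j,
    pd_apply_eq_fderiv ((hF' q).clm_apply (differentiableAt_const _)),
    fderiv_clm_apply (hF' q) (differentiableAt_const _)]
  simp

lemma pd_comm (hF : ContDiff ℝ ∞ F) (i j : Fin 3) : pd i (pd j F) = pd j (pd i F) := by
  funext q
  rw [pd_pd_eq_fderiv_fderiv hF, pd_pd_eq_fderiv_fderiv hF,
    (hF.contDiffAt.isSymmSndFDerivAt (by
      rw [minSmoothness_of_isRCLikeNormedField]; exact WithTop.coe_le_coe.mpr le_top)).eq]

end Partial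

section Connection

variable {A : Fin 3 → (ℝ × ℝ × ℝ) → Matrix (Fin r) (Fin r) ℂ}
  {F G : (ℝ × ℝ × ℝ) → Matrix (Fin r) (Fin r) ℂ}

lemma cd_def (i : Fin 3) (F : (ℝ × ℝ × ℝ) → Matrix (Fin r) (Fin r) ℂ) :
    cd A i F = pd i F + ⁅A i, F⁆ :=
  rfl

lemma curv_def (i j : Fin 3) : curv A i j = pd i (A j) - pd j (A i) + ⁅A i, A j⁆ :=
  rfl

lemma curv_swap (i j : Fin 3) : curv A j i = -curv A i j := by
  rw [curv_def, curv_def]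
  noncomm_ring [Ring.lie_def]

lemma cd_zero (i : Fin 3) : cd A i (0 : (ℝ × ℝ × ℝ) → Matrix (Fin r) (Fin r) ℂ) = 0 := by
  rw [cd_def, pd_zero]
  noncomm_ring [Ring.lie_def]

lemma cd_add (hF : Differentiable ℝ F) (hG : Differentiable ℝ G) (i : Fin 3) :
    cd A i (F + G) = cd A i F + cd A i G := by
  rw [cd_def, cd_def, cd_def, pd_add hF hG]
  noncomm_ring [Ring.lie_def]

lemma cd_neg (hF : Differentiable ℝ F) (i : Fin 3) : cd A i (-F) = -cd A i F := by
  rw [cd_def, cd_def, pd_neg hF]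
  noncomm_ring [Ring.lie_def]

lemma cd_lie (hF : Differentiable ℝ F) (hG : Differentiable ℝ G) (i : Fin 3) :
    cd A i ⁅F, G⁆ = ⁅cd A i F, G⁆ + ⁅F, cd A i G⁆ := by
  rw [cd_def, cd_def, cd_def, pd_lie hF hG]
  noncomm_ring [Ring.lie_def]

variable (hA : ∀ i, ContDiff ℝ ∞ (A i))
include hA

lemma contDiff_cd (hF : ContDiff ℝ ∞ F) (i : Fin 3) : ContDiff ℝ ∞ (cd A i F) :=
  (contDiff_pd hF i).add (((hA i).mul hF).sub (hF.mul (hA i)))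

lemma contDiff_curv (i j : Fin 3) : ContDiff ℝ ∞ (curv A i j) :=
  ((contDiff_pd (hA j) i).sub (contDiff_pd (hA i) j)).add
    (((hA i).mul (hA j)).sub ((hA j).mul (hA i)))

lemma pd_cd (hF : ContDiff ℝ ∞ F) (i j : Fin 3) :
    pd i (cd A j F) = pd i (pd j F) + ⁅pd i (A j), F⁆ + ⁅A j, pd i F⁆ := by
  have hF' := hF.differentiable (by simp)
  have hAj := (hA j).differentiable (by simp)
  rw [cd_def, pd_add (G := ⁅A j, F⁆) ((contDiff_pd hF j).differentiable (by simp))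
    ((hAj.mul hF').sub (hF'.mul hAj)), pd_lie hAj hF']
  abel

lemma pd_curv (i j k : Fin 3) :
    pd i (curv A j k) =
      pd i (pd j (A k)) - pd i (pd k (A j)) + ⁅pd i (A j), A k⁆ + ⁅A j, pd i (A k)⁆ := by
  have hAj := (hA j).differentiable (by simp)
  have hAk := (hA k).differentiable (by simp)
  have hpdAk := (contDiff_pd (hA k) j).differentiable (by simp)
  have hpdAj := (contDiff_pd (hA j) k).differentiable (by simp)
  rw [curv_def, pd_add (G := ⁅A j, A k⁆) (hpdAk.sub hpdAj) ((hAj.mul hAk).sub (hAk.mul hAj)),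
    pd_sub hpdAk hpdAj, pd_lie hAj hAk]
  abel

lemma cd_cd_comm (hF : ContDiff ℝ ∞ F) (i j : Fin 3) :
    cd A i (cd A j F) = cd A j (cd A i F) + ⁅curv A i j, F⁆ := by
  rw [cd_def (A := A) i (cd A j F), cd_def (A := A) j (cd A i F), pd_cd hA hF, pd_cd hA hF,
    pd_comm hF i j, cd_def, cd_def, curv_def]
  noncomm_ring [Ring.lie_def]

lemma cd_curv_add_cd_curv_add_cd_curv (i j k : Fin 3) :
    cd A i (curv A j k) + cd A j (curv A k i) + cd A k (curv A i j) = 0 := by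
  rw [cd_def, cd_def, cd_def, pd_curv hA, pd_curv hA, pd_curv hA, pd_comm (hA k) j i,
    pd_comm (hA j) k i, pd_comm (hA i) k j, curv_def, curv_def, curv_def]
  noncomm_ring [Ring.lie_def]

lemma cd_cd_cd_comm (hF : ContDiff ℝ ∞ F) (i j : Fin 3) :
    cd A i (cd A i (cd A j F)) =
      cd A j (cd A i (cd A i F)) + 2 • ⁅curv A i j, cd A i F⁆ + ⁅cd A i (curv A i j), F⁆ := by
  have hF' := hF.differentiable (by simp)
  have hcurv := (contDiff_curv hA i j).differentiable (by simp)
  have hΔ := (contDiff_cd hA (contDiff_cd hA hF i) j).differentiable (by simp)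
  calc cd A i (cd A i (cd A j F))
      = cd A i (cd A j (cd A i F) + ⁅curv A i j, F⁆) := by rw [cd_cd_comm hA hF]
    _ = cd A i (cd A j (cd A i F)) + cd A i ⁅curv A i j, F⁆ :=
        cd_add hΔ ((hcurv.mul hF').sub (hF'.mul hcurv)) i
    _ = cd A j (cd A i (cd A i F)) + ⁅curv A i j, cd A i F⁆ +
          (⁅cd A i (curv A i j), F⁆ + ⁅curv A i j, cd A i F⁆) := by
        rw [cd_cd_comm hA (contDiff_cd hA hF i), cd_lie hcurv hF']
    _ = _ := by abel

end Connection

section Monopole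

variable {A : Fin 3 → (ℝ × ℝ × ℝ) → Matrix (Fin r) (Fin r) ℂ}
  {φ : (ℝ × ℝ × ℝ) → Matrix (Fin r) (Fin r) ℂ} {a b c : Fin 3}
  (hA : ∀ i, ContDiff ℝ ∞ (A i)) (hφ : ContDiff ℝ ∞ φ)
  (hbc : curv A b c = cd A a φ) (hca : curv A c a = cd A b φ) (hab : curv A a b = cd A c φ)
include hA hbc hca hab

lemma cd_cd_higgs_sum_eq_zero :
    cd A a (cd A a φ) + cd A b (cd A b φ) + cd A c (cd A c φ) = 0 := by
  rw [← hbc, ← hca, ← hab]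
  exact cd_curv_add_cd_curv_add_cd_curv hA a b c

include hφ

lemma cd_cd_cd_higgs_sum :
    cd A a (cd A a (cd A a φ)) + cd A b (cd A b (cd A a φ)) + cd A c (cd A c (cd A a φ)) =
      4 • ⁅cd A b φ, cd A c φ⁆ - ⁅φ, ⁅φ, cd A a φ⁆⁆ := by
  have hcd (i j : Fin 3) : Differentiable ℝ (cd A i (cd A j φ)) :=
    (contDiff_cd hA (contDiff_cd hA hφ j) i).differentiable (by simp)
  have hcdcda : cd A a (cd A a (cd A a φ)) =
      -(cd A a (cd A b (cd A b φ)) + cd A a (cd A c (cd A c φ))) := by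
    have h := congrArg (cd A a) (cd_cd_higgs_sum_eq_zero hA hbc hca hab)
    rw [cd_add ((hcd a a).add (hcd b b)) (hcd c c), cd_add (hcd a a) (hcd b b), cd_zero,
      add_assoc] at h
    exact eq_neg_of_add_eq_zero_left h
  have hba : curv A b a = -cd A c φ := by rw [curv_swap, hab]
  have hcdb : cd A b (cd A c φ) = cd A c (cd A b φ) + ⁅cd A a φ, φ⁆ := by
    rw [cd_cd_comm hA hφ, hbc]
  rw [hcdcda, cd_cd_cd_comm hA hφ b a, cd_cd_cd_comm hA hφ c a, hba, hca,
    cd_neg ((contDiff_cd hA hφ c).differentiable (by simp)), hcdb]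
  noncomm_ring [Ring.lie_def]

lemma cd_cd_cd_higgs_sum_apply (q : ℝ × ℝ × ℝ) :
    cd A a (cd A a (cd A a φ)) q + cd A b (cd A b (cd A a φ)) q + cd A c (cd A c (cd A a φ)) q =
      (4 : ℂ) • (cd A b φ q * cd A c φ q - cd A c φ q * cd A b φ q) -
        (φ q * (φ q * cd A a φ q - cd A a φ q * φ q) -
          (φ q * cd A a φ q - cd A a φ q * φ q) * φ q) := by
  have h := congrFun (cd_cd_cd_higgs_sum hA hφ hbc hca hab) q
  simp only [Ring.lie_def, Pi.add_apply, Pi.sub_apply, Pi.mul_apply, Pi.smul_apply] at h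
  rw [ofNat_smul_eq_nsmul]
  exact h

end Monopole

end

/-- Indices `0, 1, 2` stand for `t, x, y`; `h1`, `h2`, `h3` are the Bogomolny equations. -/
theorem weitzenboeck (r : ℕ) (A : Fin 3 → (ℝ × ℝ × ℝ) → Matrix (Fin r) (Fin r) ℂ)
    (φ : (ℝ × ℝ × ℝ) → Matrix (Fin r) (Fin r) ℂ)
    (hA : ∀ i, ContDiff ℝ (⊤ : ℕ∞) (A i)) (hφ : ContDiff ℝ (⊤ : ℕ∞) φ)
    (h1 : curv A 1 2 = cd A 0 φ) (h2 : curv A 2 0 = cd A 1 φ) (h3 : curv A 0 1 = cd A 2 φ) :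
    ∀ a b c : Fin 3,
      ((a, b, c) = ((0 : Fin 3), (1 : Fin 3), (2 : Fin 3)) ∨
        (a, b, c) = (1, 2, 0) ∨ (a, b, c) = (2, 0, 1)) →
      ∀ q : ℝ × ℝ × ℝ,
        cd A 1 (cd A 1 (cd A a φ)) q + cd A 2 (cd A 2 (cd A a φ)) q +
            cd A 0 (cd A 0 (cd A a φ)) q =
          (4 : ℂ) • (cd A b φ q * cd A c φ q - cd A c φ q * cd A b φ q) -
            (φ q * (φ q * cd A a φ q - cd A a φ q * φ q) -
              (φ q * cd A a φ q - cd A a φ q * φ q) * φ q) := by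
  intro a b c habc q
  simp only [Prod.mk.injEq] at habc
  rcases habc with ⟨rfl, rfl, rfl⟩ | ⟨rfl, rfl, rfl⟩ | ⟨rfl, rfl, rfl⟩
  · rw [← cd_cd_cd_higgs_sum_apply hA hφ h1 h2 h3 q]
    abel
  · exact cd_cd_cd_higgs_sum_apply hA hφ h2 h3 h1 q
  · rw [← cd_cd_cd_higgs_sum_apply hA hφ h3 h1 h2 q]
    abel

end Bogomolny
end
end
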